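/- arXiv:1812.11170 — 9 statements merged into one kernel-verified Lean document; each statement's English description precedes it below -/
import Mathlib

section
/- Let n ≥ 1 be an integer, χ > 0 a real number, and V : ℂ → (−∞, ∞] a measurable function. Define Ṽ : ℂ∖{0} → (−∞, ∞] by Ṽ(x) = V(1/x) + log|x|. Let μ be the measure on (ℂ∖{0})ⁿ with density (x₁,…,xₙ) ↦ ∏_{1≤i<j≤n} |xᵢ−xⱼ|² · exp(−2(n+χ) ∑_{i=1}^n V(xᵢ)) with respect to the n-fold product of Lebesgue measure on ℂ (where exp(−∞) is interpreted as 0). Then the pushforward of μ under the map (x₁,…,xₙ) ↦ (1/x₁,…,1/xₙ) equals the measure on (ℂ∖{0})ⁿ with density (x₁,…,xₙ) ↦ ∏_{1≤i<j≤n} |xᵢ−xⱼ|² · exp(−2(n+χ) ∑_{i=1}^n Ṽ(xᵢ)) · ∏_{i=1}^n |xᵢ|^{2(χ−1)} with respect to the n-fold product of Lebesgue measure on ℂ. -/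
/-!
Inversion `x ↦ x⁻¹` is an involution of `(ℂ∖{0})ⁿ` with real Jacobian `∏ |xᵢ|⁻⁴`, so the claim is
a change of variables once the densities are compared pointwise. Since
`|xᵢ⁻¹ - xⱼ⁻¹|² = |xᵢ - xⱼ|² |xᵢ|⁻² |xⱼ|⁻²`, the squared Vandermonde picks up `∏ |xₖ|^(-2(n-1))`,
and `Ṽ(xᵢ⁻¹) = V(xᵢ) - log |xᵢ|` contributes `∏ |xₖ|^(2(n+χ))`. With the weight `∏ |xₖ|^(-2(χ-1))`
the exponents add up to `-4 - 2(n-1) + 2(n+χ) - 2(χ-1) = 0` in every coordinate.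
-/

open MeasureTheory Filter Topology

/-- `wexp c s = e^{-c·s}` for `s ∈ (-∞, ∞]`, as a value in `[0,∞]`,
with the convention `e^{-c·∞} = 0` (for `c > 0`). -/
noncomputable def wexp (c : ℝ) (s : EReal) : ENNReal :=
  if s = ⊤ then 0 else ENNReal.ofReal (Real.exp (-(c * s.toReal)))

open Finset

theorem map_withDensity_eq_withDensity_of_hasFDerivWithinAt
    {E : Type*} [NormedAddCommGroup E] [NormedSpace ℝ E] [FiniteDimensional ℝ E]
    [MeasurableSpace E] [BorelSpace E] (μ : Measure E) [μ.IsAddHaarMeasure]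
    {s : Set E} {f : E → E} {f' : E → E →L[ℝ] E} (hs : MeasurableSet s)
    (hf' : ∀ x ∈ s, HasFDerivWithinAt f (f' x) s x) (hf : Set.InjOn f s) (hfm : Measurable f)
    {ρ g : E → ENNReal} (hρ : ∀ x ∈ s, ρ x = ENNReal.ofReal |(f' x).det| * g (f x)) :
    Measure.map f ((μ.restrict s).withDensity ρ) = (μ.restrict (f '' s)).withDensity g := by
  ext A hA
  have hsA : MeasurableSet (s ∩ f ⁻¹' A) := hs.inter (hfm hA)
  rw [Measure.map_apply hfm hA, withDensity_apply _ (hfm hA), withDensity_apply _ hA,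
    Measure.restrict_restrict (hfm hA), Measure.restrict_restrict hA, Set.inter_comm,
    Set.inter_comm A, ← Set.image_inter_preimage,
    lintegral_image_eq_lintegral_abs_det_fderiv_mul μ hsA
      (fun x hx => (hf' x hx.1).mono Set.inter_subset_left) (hf.mono Set.inter_subset_left)]
  exact setLIntegral_congr_fun hsA fun x hx => hρ x hx.1

lemma wexp_add_coe (c : ℝ) {s : EReal} (hs : s ≠ ⊥) (r : ℝ) :
    wexp c (s + r) = wexp c s * ENNReal.ofReal (Real.exp (-(c * r))) := by
  by_cases ht : s = ⊤
  · simp [ht, wexp]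
  · lift s to ℝ using ⟨ht, hs⟩
    simp only [wexp, ← EReal.coe_add, EReal.coe_ne_top, if_false, EReal.toReal_coe,
      ← ENNReal.ofReal_mul (Real.exp_nonneg _), ← Real.exp_add]
    ring_nf

lemma wexp_sum_add_coe {ι : Type*} (c : ℝ) (s : Finset ι) {a : ι → EReal} (ha : ∀ i, a i ≠ ⊥)
    (r : ι → ℝ) :
    wexp c (∑ i ∈ s, (a i + r i)) =
      wexp c (∑ i ∈ s, a i) * ENNReal.ofReal (Real.exp (-(c * ∑ i ∈ s, r i))) := by
  have hsum_ne_bot : ∑ i ∈ s, a i ≠ ⊥ := by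
    induction s using Finset.cons_induction <;> simp_all [EReal.add_eq_bot_iff]
  have hcoe_sum : ((∑ i ∈ s, r i : ℝ) : EReal) = ∑ i ∈ s, (r i : EReal) :=
    map_sum (⟨⟨(↑), EReal.coe_zero⟩, EReal.coe_add⟩ : ℝ →+ EReal) r s
  rw [sum_add_distrib, ← hcoe_sum, wexp_add_coe c hsum_ne_bot]

lemma exp_neg_mul_sum_log_norm_inv {ι : Type*} (s : Finset ι) (c : ℝ) {x : ι → ℂ}
    (hx : ∀ i, x i ≠ 0) :
    Real.exp (-(c * ∑ i ∈ s, Real.log ‖(x i)⁻¹‖)) = ∏ i ∈ s, ‖x i‖ ^ c := by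
  simp_rw [norm_inv, Real.log_inv, sum_neg_distrib, mul_neg, neg_neg, mul_sum, Real.exp_sum]
  exact prod_congr rfl fun i _ => by rw [Real.rpow_def_of_pos (norm_pos_iff.2 (hx i)), mul_comm]

lemma ContinuousLinearMap.det_pi_mul_proj {ι : Type*} [Fintype ι] (c : ι → ℂ) :
    (pi fun i => (mul ℝ ℂ (c i)).comp (proj i)).det = ∏ i, Complex.normSq (c i) := by
  rw [det_pi]
  refine prod_congr rfl fun i _ => ?_
  rw [← Algebra.norm_complex_apply, Algebra.norm_apply]
  rfl

lemma hasFDerivAt_pi_inv {ι : Type*} [Fintype ι] {x : ι → ℂ} (hx : ∀ i, x i ≠ 0) :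
    HasFDerivAt (fun y : ι → ℂ => fun i => (y i)⁻¹)
      (ContinuousLinearMap.pi fun i => (ContinuousLinearMap.mul ℝ ℂ (-(x i ^ 2)⁻¹)).comp
        (ContinuousLinearMap.proj i)) x := by
  refine hasFDerivAt_pi.2 fun i => ?_
  have h : HasFDerivAt (fun z : ℂ => z⁻¹) (ContinuousLinearMap.mul ℝ ℂ (-(x i ^ 2)⁻¹)) (x i) :=
    ((hasDerivAt_inv (hx i)).hasFDerivAt.restrictScalars ℝ).congr_fderiv (by ext; simp [mul_comm])
  exact h.comp x (hasFDerivAt_apply i x)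

lemma Fin.prod_prod_Ioi_mul {n : ℕ} {M : Type*} [CommMonoid M] (b : Fin n → M) :
    ∏ i, ∏ j ∈ Ioi i, b i * b j = ∏ k, b k ^ (n - 1) := by
  simp_rw [Finset.prod_mul_distrib, Finset.prod_const, card_Ioi]
  rw [Finset.prod_comm' (t' := univ) (s' := fun j => Iio j) (by simp)]
  simp_rw [Finset.prod_const, card_Iio, ← Finset.prod_mul_distrib, ← pow_add]
  exact Finset.prod_congr rfl fun k _ => congrArg _ (by omega)

lemma norm_inv_sub_inv_sq {z w : ℂ} (hz : z ≠ 0) (hw : w ≠ 0) :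
    ‖z⁻¹ - w⁻¹‖ ^ 2 = ‖z - w‖ ^ 2 * ((‖z‖ ^ 2)⁻¹ * (‖w‖ ^ 2)⁻¹) := by
  rw [inv_sub_inv hz hw, norm_div, norm_sub_rev, norm_mul]
  ring

noncomputable def sqVandermonde {n : ℕ} (x : Fin n → ℂ) : ℝ :=
  ∏ i, ∏ j ∈ Ioi i, ‖x i - x j‖ ^ 2

lemma sqVandermonde_nonneg {n : ℕ} (x : Fin n → ℂ) : 0 ≤ sqVandermonde x :=
  prod_nonneg fun _ _ => prod_nonneg fun _ _ => sq_nonneg _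

lemma sqVandermonde_inv {n : ℕ} {x : Fin n → ℂ} (hx : ∀ i, x i ≠ 0) :
    sqVandermonde (fun i => (x i)⁻¹) = sqVandermonde x * ∏ k, ((‖x k‖ ^ 2)⁻¹) ^ (n - 1) := by
  have h (i j : Fin n) := norm_inv_sub_inv_sq (hx i) (hx j)
  simp only [sqVandermonde, h, ← Fin.prod_prod_Ioi_mul, ← prod_mul_distrib]

lemma rpow_weight_eq_one {n : ℕ} (hn : 1 ≤ n) (χ : ℝ) {t : ℝ} (ht : 0 < t) :
    (t ^ 4)⁻¹ * ((t ^ 2)⁻¹) ^ (n - 1) * (t ^ (2 * ((n : ℝ) + χ)) * t⁻¹ ^ (2 * (χ - 1))) = 1 := by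
  rw [Real.inv_rpow ht.le, ← Real.rpow_neg ht.le, ← Real.rpow_add ht, inv_pow, ← pow_mul,
    ← mul_inv, ← pow_add, show 2 * ((n : ℝ) + χ) + -(2 * (χ - 1)) = ((4 + 2 * (n - 1) : ℕ) : ℝ) by
      push_cast [Nat.cast_sub hn]; ring, Real.rpow_natCast, inv_mul_cancel₀ (by positivity)]

lemma abs_prod_normSq_mul_sqVandermonde_inv {n : ℕ} (χ : ℝ) {x : Fin n → ℂ}
    (hx : ∀ i, x i ≠ 0) :
    |∏ i, Complex.normSq (-(x i ^ 2)⁻¹)| *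
        (sqVandermonde (fun i => (x i)⁻¹) * (∏ i, ‖x i‖ ^ (2 * ((n : ℝ) + χ))) *
          ∏ i, ‖(x i)⁻¹‖ ^ (2 * (χ - 1))) =
      sqVandermonde x := by
  -- `k.pos` rules out `n = 0`, where `n - 1` would truncate
  have hweight : ∏ k, ((‖x k‖ ^ 4)⁻¹ * ((‖x k‖ ^ 2)⁻¹) ^ (n - 1) *
      (‖x k‖ ^ (2 * ((n : ℝ) + χ)) * ‖x k‖⁻¹ ^ (2 * (χ - 1)))) = 1 :=
    prod_eq_one fun k _ => rpow_weight_eq_one k.pos χ (norm_pos_iff.2 (hx k))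
  simp only [prod_mul_distrib] at hweight
  rw [abs_of_nonneg (prod_nonneg fun _ _ => Complex.normSq_nonneg _), sqVandermonde_inv hx]
  have hjac (i : Fin n) : Complex.normSq (-(x i ^ 2)⁻¹) = (‖x i‖ ^ 4)⁻¹ := by
    simp [Complex.normSq_eq_norm_sq, ← pow_mul]
  simp only [hjac, norm_inv]
  linear_combination sqVandermonde x * hweight

lemma ofReal_abs_prod_normSq_mul_density_inv {n : ℕ} (χ : ℝ) {V : ℂ → EReal} (hV : ∀ z, V z ≠ ⊥)
    {x : Fin n → ℂ} (hx : ∀ i, x i ≠ 0) :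
    ENNReal.ofReal |∏ i, Complex.normSq (-(x i ^ 2)⁻¹)| *
        (ENNReal.ofReal (sqVandermonde fun i => (x i)⁻¹) *
          wexp (2 * ((n : ℝ) + χ))
            (∑ i, (V ((x i)⁻¹⁻¹) + ((Real.log ‖(x i)⁻¹‖ : ℝ) : EReal))) *
          ENNReal.ofReal (∏ i, ‖(x i)⁻¹‖ ^ (2 * (χ - 1)))) =
      ENNReal.ofReal (sqVandermonde x) * wexp (2 * ((n : ℝ) + χ)) (∑ i, V (x i)) := by
  simp only [inv_inv]
  have hpow_nonneg : 0 ≤ ∏ i, ‖x i‖ ^ (2 * ((n : ℝ) + χ)) := by positivity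
  rw [wexp_sum_add_coe _ _ (fun i => hV (x i)), exp_neg_mul_sum_log_norm_inv _ _ hx,
    ← abs_prod_normSq_mul_sqVandermonde_inv χ hx, ENNReal.ofReal_mul (abs_nonneg _),
    ENNReal.ofReal_mul (mul_nonneg (sqVandermonde_nonneg _) hpow_nonneg),
    ENNReal.ofReal_mul (sqVandermonde_nonneg _)]
  ring

theorem inversionOfCoulombGases_general
    (n : ℕ) (χ : ℝ)
    (V : ℂ → EReal) (hVbot : ∀ x : ℂ, V x ≠ ⊥) :
    Measure.map (fun (x : Fin n → ℂ) (i : Fin n) => (x i)⁻¹)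
        ((volume.restrict {x : Fin n → ℂ | ∀ i, x i ≠ 0}).withDensity fun x =>
          ENNReal.ofReal (∏ i : Fin n, ∏ j ∈ Finset.Ioi i,
              ‖x i - x j‖ ^ 2) *
            wexp (2 * ((n : ℝ) + χ)) (∑ i : Fin n, V (x i))) =
      (volume.restrict {x : Fin n → ℂ | ∀ i, x i ≠ 0}).withDensity fun x =>
        ENNReal.ofReal (∏ i : Fin n, ∏ j ∈ Finset.Ioi i,
            ‖x i - x j‖ ^ 2) *
          wexp (2 * ((n : ℝ) + χ))
            (∑ i : Fin n, (V ((x i)⁻¹) + ((Real.log (‖x i‖) : ℝ) : EReal))) *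
          ENNReal.ofReal (∏ i : Fin n, ‖x i‖ ^ (2 * (χ - 1))) := by
  have hS : MeasurableSet {x : Fin n → ℂ | ∀ i, x i ≠ 0} := by
    simp only [Set.ofPred_forall]
    exact .iInter fun i => (measurableSet_singleton 0).compl.preimage (measurable_pi_apply i)
  have hinv : Function.Involutive fun (x : Fin n → ℂ) (i : Fin n) => (x i)⁻¹ :=
    fun x => funext fun i => inv_inv (x i)
  have himage : (fun (x : Fin n → ℂ) (i : Fin n) => (x i)⁻¹) '' {x | ∀ i, x i ≠ 0} =
      {x | ∀ i, x i ≠ 0} := by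
    rw [Set.image_eq_preimage_of_inverse hinv.leftInverse hinv.rightInverse]
    ext x
    simp
  conv_rhs => rw [← himage]
  refine map_withDensity_eq_withDensity_of_hasFDerivWithinAt volume hS
    (fun x hx => (hasFDerivAt_pi_inv hx).hasFDerivWithinAt) hinv.injective.injOn
    (measurable_pi_lambda _ fun i => (measurable_pi_apply i).inv) fun x hx => ?_
  rw [ContinuousLinearMap.det_pi_mul_proj]
  exact (ofReal_abs_prod_normSq_mul_density_inv χ hVbot hx).symm

theorem inversionOfCoulombGases
    (n : ℕ) (hn : 1 ≤ n) (χ : ℝ) (hχ : 0 < χ)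
    (V : ℂ → EReal) (hVmeas : Measurable V) (hVbot : ∀ x : ℂ, V x ≠ ⊥) :
    Measure.map (fun (x : Fin n → ℂ) (i : Fin n) => (x i)⁻¹)
        ((volume.restrict {x : Fin n → ℂ | ∀ i, x i ≠ 0}).withDensity fun x =>
          ENNReal.ofReal (∏ i : Fin n, ∏ j ∈ Finset.Ioi i,
              ‖x i - x j‖ ^ 2) *
            wexp (2 * ((n : ℝ) + χ)) (∑ i : Fin n, V (x i))) =
      (volume.restrict {x : Fin n → ℂ | ∀ i, x i ≠ 0}).withDensity fun x =>
        ENNReal.ofReal (∏ i : Fin n, ∏ j ∈ Finset.Ioi i,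
            ‖x i - x j‖ ^ 2) *
          wexp (2 * ((n : ℝ) + χ))
            (∑ i : Fin n, (V ((x i)⁻¹) + ((Real.log (‖x i‖) : ℝ) : EReal))) *
          ENNReal.ofReal (∏ i : Fin n, ‖x i‖ ^ (2 * (χ - 1))) :=
  inversionOfCoulombGases_general n χ V hVbot
end

section
/- Let q > 1 and χ ≥ 0, and let (mₙ)_{n≥1} be a sequence of real numbers with mₙ > 1 for all n, mₙ → 1, and mₙⁿ → ∞ as n → ∞. Then the sequences aₙ = ∑_{k=0}^{n−1} log( 1 − (k+1) mₙ^{2k+2−2q(n+χ)} / (q(n+χ)) ) and bₙ = −(1/(2q)) · 1/( mₙ^{2(q−1)n} (mₙ − 1) ) are asymptotically equivalent as n → ∞, i.e. aₙ / bₙ → 1. -/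
open Filter Topology Finset

/-!
Write `aₙ = ∑ log (1 - tₖ)`. Since `t ≤ -log (1 - t) ≤ t / (1 - t)`, `-aₙ` lies between
`Sₙ = ∑ tₖ` and `Sₙ / (1 - Tₙ)`, where `Tₙ = (mₙⁿ)^(-2(q-1)) / q` bounds every `tₖ` and tends
to `0`. The sum `Sₙ` is arithmetico-geometric in `mₙ²`; its closed form shows `Sₙ / (-bₙ) → 1`
because `mₙ → 1` and `n (mₙ - 1) ≥ log (mₙⁿ) → ∞`.
-/

lemma sum_range_succ_mul_pow_mul_sub_one_sq {R : Type*} [CommRing R] (x : R) (n : ℕ) :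
    (∑ k ∈ range n, ((k : R) + 1) * x ^ k) * (x - 1) ^ 2 =
      n * x ^ (n + 1) - (n + 1) * x ^ n + 1 := by
  induction n with
  | zero => simp
  | succ n ih =>
    rw [sum_range_succ, add_mul, ih]
    push_cast
    ring

lemma le_neg_log_one_sub {t : ℝ} (ht : t < 1) : t ≤ -Real.log (1 - t) := by
  linarith [Real.log_le_sub_one_of_pos (sub_pos.2 ht)]

lemma neg_log_one_sub_le {t : ℝ} (ht : t < 1) : -Real.log (1 - t) ≤ t / (1 - t) := by
  have h := Real.one_sub_inv_le_log_of_pos (sub_pos.2 ht)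
  have : 1 - (1 - t)⁻¹ = -(t / (1 - t)) := by field_simp [(sub_pos.2 ht).ne']; ring
  linarith

lemma tendsto_neg_sum_log_one_sub_div {α ι : Type*} {l : Filter α} {s : α → Finset ι}
    {t : α → ι → ℝ} {T B : α → ℝ} (hB : ∀ a, 0 < B a)
    (ht0 : ∀ a, ∀ i ∈ s a, 0 ≤ t a i) (htT : ∀ a, ∀ i ∈ s a, t a i ≤ T a)
    (hT : Tendsto T l (𝓝 0))
    (hS : Tendsto (fun a => (∑ i ∈ s a, t a i) / B a) l (𝓝 1)) :
    Tendsto (fun a => (-∑ i ∈ s a, Real.log (1 - t a i)) / B a) l (𝓝 1) := by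
  have hupper : Tendsto (fun a => (∑ i ∈ s a, t a i) / B a / (1 - T a)) l (𝓝 1) := by
    have h := hS.div (tendsto_const_nhds.sub hT) (by norm_num : (1 : ℝ) - 0 ≠ 0)
    rwa [sub_zero, div_one] at h
  refine tendsto_of_tendsto_of_tendsto_of_le_of_le' hS hupper ?_ ?_ <;>
    filter_upwards [hT.eventually_lt_const one_pos] with a hT1 <;>
    rw [← sum_neg_distrib]
  · refine div_le_div_of_nonneg_right (sum_le_sum fun i hi => ?_) (hB a).le
    exact le_neg_log_one_sub ((htT a i hi).trans_lt hT1)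
  · rw [div_right_comm, sum_div (s a) (t a) (1 - T a)]
    refine div_le_div_of_nonneg_right (sum_le_sum fun i hi => ?_) (hB a).le
    calc -Real.log (1 - t a i) ≤ t a i / (1 - t a i) :=
          neg_log_one_sub_le ((htT a i hi).trans_lt hT1)
      _ ≤ t a i / (1 - T a) := by
          have := htT a i hi
          gcongr
          exact ht0 a i hi

lemma tendsto_mul_sub_one_of_tendsto_pow {m : ℕ → ℝ} (hm : ∀ n, 0 < m n)
    (h : Tendsto (fun n => m n ^ n) atTop atTop) :
    Tendsto (fun n : ℕ => n * (m n - 1)) atTop atTop := by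
  refine tendsto_atTop_mono (fun n => ?_) (Real.tendsto_log_atTop.comp h)
  rw [Function.comp_apply, Real.log_pow]
  exact mul_le_mul_of_nonneg_left (Real.log_le_sub_one_of_pos (hm n)) n.cast_nonneg

/-- `aₙ = ∑ k < n, log (1 - cdfTerm q χ mₙ n k)`. -/
noncomputable def cdfTerm (q χ M : ℝ) (n k : ℕ) : ℝ :=
  ((k : ℝ) + 1) * M ^ (2 * (k : ℝ) + 2 - 2 * q * ((n : ℝ) + χ)) / (q * ((n : ℝ) + χ))

/-- `bₙ = -cdfScale q mₙ n`. -/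
noncomputable def cdfScale (q M : ℝ) (n : ℕ) : ℝ :=
  1 / (2 * q) * (1 / (M ^ (2 * (q - 1) * (n : ℝ)) * (M - 1)))

section

variable {q χ M : ℝ} {n : ℕ}

lemma cdfScale_pos (hq : 0 < q) (hM : 1 < M) : 0 < cdfScale q M n := by
  have := Real.rpow_pos_of_pos (one_pos.trans hM) (2 * (q - 1) * n)
  have := sub_pos.2 hM
  unfold cdfScale
  positivity

lemma cdfTerm_nonneg {k : ℕ} (hq : 0 < q) (hχ : 0 ≤ χ) (hM : 0 < M) : 0 ≤ cdfTerm q χ M n k := by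
  unfold cdfTerm
  positivity

lemma cdfTerm_le {k : ℕ} (hq : 0 < q) (hχ : 0 ≤ χ) (hM : 1 ≤ M) (hk : k < n) :
    cdfTerm q χ M n k ≤ (M ^ n) ^ (-(2 * (q - 1))) / q := by
  have hkn : (k : ℝ) + 1 ≤ n := by exact_mod_cast hk
  have hN : 0 < (n : ℝ) + χ := by linarith
  have hexp : M ^ (2 * (k : ℝ) + 2 - 2 * q * ((n : ℝ) + χ)) ≤ (M ^ n) ^ (-(2 * (q - 1))) := by
    rw [← Real.rpow_natCast, ← Real.rpow_mul (by linarith)]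
    exact Real.rpow_le_rpow_of_exponent_le hM (by nlinarith)
  calc cdfTerm q χ M n k
      = ((k + 1) / (n + χ)) * M ^ (2 * (k : ℝ) + 2 - 2 * q * ((n : ℝ) + χ)) / q := by
        unfold cdfTerm
        field_simp
    _ ≤ 1 * (M ^ n) ^ (-(2 * (q - 1))) / q := by
        gcongr
        rw [div_le_one hN]
        linarith
    _ = (M ^ n) ^ (-(2 * (q - 1))) / q := by rw [one_mul]

lemma sum_cdfTerm_div_cdfScale (hq : q ≠ 0) (hN : 0 < (n : ℝ) + χ) (hM : 1 < M) :
    (∑ k ∈ range n, cdfTerm q χ M n k) / cdfScale q M n =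
      2 * M ^ 2 / ((M + 1) * M ^ (2 * q * χ)) *
        (n / (n + χ) - (1 - (M ^ (2 * n))⁻¹) / ((n + χ) * (M ^ 2 - 1))) := by
  have hM0 : 0 < M := by linarith
  have hterm : ∀ k ∈ range n, cdfTerm q χ M n k =
      ((k : ℝ) + 1) * (M ^ 2) ^ k * (M ^ (2 - 2 * q * ((n : ℝ) + χ)) / (q * ((n : ℝ) + χ))) := by
    intro k _
    rw [cdfTerm, add_sub_assoc, Real.rpow_add hM0, ← pow_mul, ← Real.rpow_natCast]
    push_cast
    ring
  have hsum : ∑ k ∈ range n, ((k : ℝ) + 1) * (M ^ 2) ^ k =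
      (n * (M ^ 2) ^ (n + 1) - (n + 1) * (M ^ 2) ^ n + 1) / (M ^ 2 - 1) ^ 2 := by
    rw [eq_div_iff (pow_ne_zero 2 (by nlinarith)), sum_range_succ_mul_pow_mul_sub_one_sq]
  have hpow : M ^ (2 - 2 * q * ((n : ℝ) + χ)) =
      M ^ 2 / (M ^ (2 * n) * M ^ (2 * q * χ) * M ^ (2 * (q - 1) * (n : ℝ))) := by
    rw [eq_div_iff (by positivity), ← Real.rpow_natCast M (2 * n), ← Real.rpow_add hM0,
      ← Real.rpow_add hM0, ← Real.rpow_add hM0, ← Real.rpow_natCast M 2]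
    congr 1
    push_cast
    ring
  have hMsub : M - 1 ≠ 0 := by linarith
  have hMsq : M ^ 2 - 1 ≠ 0 := by nlinarith
  have hMadd : M + 1 ≠ 0 := by linarith
  rw [sum_congr rfl hterm, ← sum_mul, hsum, hpow, cdfScale]
  field_simp
  ring

lemma one_sub_inv_pow_div_le (hχ : 0 ≤ χ) (hM : 1 < M) (hn : 0 < n) :
    (1 - (M ^ (2 * n))⁻¹) / ((n + χ) * (M ^ 2 - 1)) ≤ (n * (M - 1))⁻¹ := by
  have hn' : (1 : ℝ) ≤ n := by exact_mod_cast hn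
  have hden : (n : ℝ) * (M - 1) ≤ (n + χ) * (M ^ 2 - 1) := by
    gcongr <;> nlinarith
  have hpos : 0 < (n : ℝ) * (M - 1) := by nlinarith
  have hinv : 0 < (M ^ (2 * n))⁻¹ := by positivity
  calc (1 - (M ^ (2 * n))⁻¹) / ((n + χ) * (M ^ 2 - 1))
      ≤ 1 / ((n + χ) * (M ^ 2 - 1)) :=
        div_le_div_of_nonneg_right (by linarith) (hpos.trans_le hden).le
    _ ≤ 1 / (n * (M - 1)) := one_div_le_one_div_of_le hpos hden
    _ = (n * (M - 1))⁻¹ := one_div _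

end

lemma tendsto_sum_cdfTerm_div_cdfScale {q χ : ℝ} {m : ℕ → ℝ} (hq : q ≠ 0) (hχ : 0 ≤ χ)
    (hm1 : ∀ n, 1 < m n) (hml : Tendsto m atTop (𝓝 1))
    (hmn : Tendsto (fun n : ℕ => n * (m n - 1)) atTop atTop) :
    Tendsto (fun n => (∑ k ∈ range n, cdfTerm q χ (m n) n k) / cdfScale q (m n) n)
      atTop (𝓝 1) := by
  have hfactor : Tendsto (fun n => 2 * m n ^ 2 / ((m n + 1) * m n ^ (2 * q * χ))) atTop (𝓝 1) := by
    have hc : ContinuousAt (fun x : ℝ => 2 * x ^ 2 / ((x + 1) * x ^ (2 * q * χ))) 1 := by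
      fun_prop (disch := norm_num)
    have h1 : (2 : ℝ) * 1 ^ 2 / ((1 + 1) * 1 ^ (2 * q * χ)) = 1 := by norm_num
    simpa only [h1, Function.comp_def] using hc.tendsto.comp hml
  have herr : Tendsto (fun n : ℕ => (1 - (m n ^ (2 * n))⁻¹) / ((n + χ) * (m n ^ 2 - 1)))
      atTop (𝓝 0) := by
    refine squeeze_zero' (Eventually.of_forall fun n => ?_) ?_ hmn.inv_tendsto_atTop
    · have hM := hm1 n
      refine div_nonneg (sub_nonneg.2 (inv_le_one_of_one_le₀ (one_le_pow₀ hM.le))) ?_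
      exact mul_nonneg (by positivity) (by nlinarith)
    · filter_upwards [eventually_gt_atTop 0] with n hn
      exact one_sub_inv_pow_div_le hχ (hm1 n) hn
  have hlim := hfactor.mul ((tendsto_natCast_div_add_atTop χ).sub herr)
  rw [sub_zero, mul_one] at hlim
  refine hlim.congr' ?_
  filter_upwards [eventually_gt_atTop 0] with n hn
  rw [sum_cdfTerm_div_cdfScale hq (by positivity) (hm1 n)]

theorem cdfEquivalence
    (q χ : ℝ) (hq : 1 < q) (hχ : 0 ≤ χ) (m : ℕ → ℝ)
    (hm1 : ∀ n, 1 < m n)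
    (hml : Tendsto m atTop (𝓝 1))
    (hmn : Tendsto (fun n : ℕ => m n ^ n) atTop atTop) :
    Tendsto (fun n : ℕ =>
        (∑ k ∈ Finset.range n,
          Real.log (1 - ((k : ℝ) + 1) *
            m n ^ (2 * (k : ℝ) + 2 - 2 * q * ((n : ℝ) + χ)) / (q * ((n : ℝ) + χ)))) /
        (-(1 / (2 * q)) * (1 / (m n ^ (2 * (q - 1) * (n : ℝ)) * (m n - 1)))))
      atTop (𝓝 1) := by
  have hq0 : 0 < q := by linarith
  have hm0 : ∀ n, 0 < m n := fun n => one_pos.trans (hm1 n)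
  have hT : Tendsto (fun n : ℕ => (m n ^ n) ^ (-(2 * (q - 1))) / q) atTop (𝓝 0) := by
    simpa using ((tendsto_rpow_neg_atTop (by linarith)).comp hmn).div_const q
  have key := tendsto_neg_sum_log_one_sub_div (s := fun n => range n)
    (t := fun n k => cdfTerm q χ (m n) n k) (fun n => cdfScale_pos hq0 (hm1 n))
    (fun n k _ => cdfTerm_nonneg hq0 hχ (hm0 n))
    (fun n k hk => cdfTerm_le hq0 hχ (hm1 n).le (mem_range.1 hk)) hT
    (tendsto_sum_cdfTerm_div_cdfScale hq0.ne' hχ hm1 hml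
      (tendsto_mul_sub_one_of_tendsto_pow hm0 hmn))
  refine key.congr fun n => ?_
  rw [cdfScale, neg_mul, div_neg, neg_div]
  rfl
end

section
/- Let q > 1 and χ ≥ 0, and let (mₙ)_{n≥1} be a sequence of real numbers with mₙ > 1 for all n, mₙ → 1, mₙⁿ → ∞, and n(mₙ − 1)² → 0 as n → ∞. Then the sequences aₙ = ∑_{k=0}^{n−1} log( 1 − (k+1) mₙ^{2k+2−2q(n+χ)} / (q(n+χ)) ) and cₙ = −(1/(2q)) · 1/( e^{2(q−1) n (mₙ−1)} (mₙ − 1) ) are asymptotically equivalent as n → ∞, i.e. aₙ / cₙ → 1. -/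
/-!
Write `xₙₖ` for the `k`-th summand, so `aₙ = ∑ₖ log (1 - xₙₖ)`. Every `xₙₖ` lies in `(0, Mₙ]` with
`Mₙ = mₙ^(-n(2q-2)) / q → 0`, and `-x/(1-M) ≤ log (1-x) ≤ -x` on `[0, M]`, so `aₙ ~ -∑ₖ xₙₖ`.
In `r = mₙ²` the sum `∑ₖ xₙₖ` is arithmetico-geometric; its closed form gives
`2q(mₙ-1) e^{2(q-1)n(mₙ-1)} ∑ₖ xₙₖ` as a product of four factors tending to `1`. The correction
factor is `1 - O(1/(n(mₙ-1)))`, and `n(mₙ-1) → ∞` because `n log mₙ → ∞`. The exponential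
factor is `exp (2(q-1) n (mₙ-1-log mₙ) + (2-2qχ) log mₙ)`, which tends to `1` because
`0 ≤ mₙ-1-log mₙ ≤ (mₙ-1)²`.
-/

open Filter Topology

section LogOneSub

variable {ι : Type*} (s : Finset ι) (x : ι → ℝ)

theorem sum_log_one_sub_le_neg_sum (hx : ∀ i ∈ s, x i < 1) :
    ∑ i ∈ s, Real.log (1 - x i) ≤ -∑ i ∈ s, x i := by
  rw [← Finset.sum_neg_distrib]
  refine Finset.sum_le_sum fun i hi => ?_
  linarith [Real.log_le_sub_one_of_pos (sub_pos.mpr (hx i hi))]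

theorem neg_sum_div_le_sum_log_one_sub {M : ℝ} (hx0 : ∀ i ∈ s, 0 ≤ x i)
    (hxM : ∀ i ∈ s, x i ≤ M) (hM : M < 1) :
    -(∑ i ∈ s, x i) / (1 - M) ≤ ∑ i ∈ s, Real.log (1 - x i) := by
  rw [neg_div, Finset.sum_div, ← Finset.sum_neg_distrib]
  refine Finset.sum_le_sum fun i hi => ?_
  have hxi : 0 < 1 - x i := by linarith [hxM i hi]
  calc -(x i / (1 - M)) ≤ -(x i / (1 - x i)) :=
        neg_le_neg (div_le_div_of_nonneg_left (hx0 i hi) (by linarith) (by linarith [hxM i hi]))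
    _ = 1 - (1 - x i)⁻¹ := by field_simp; ring
    _ ≤ Real.log (1 - x i) := Real.one_sub_inv_le_log_of_pos hxi

end LogOneSub

theorem tendsto_sum_log_one_sub_div_neg_sum {α ι : Type*} {l : Filter α} {s : α → Finset ι}
    {x : α → ι → ℝ} {M : α → ℝ} (hM : Tendsto M l (𝓝 0))
    (hx : ∀ᶠ a in l, ∀ i ∈ s a, 0 ≤ x a i ∧ x a i ≤ M a)
    (hS : ∀ᶠ a in l, 0 < ∑ i ∈ s a, x a i) :
    Tendsto (fun a => (∑ i ∈ s a, Real.log (1 - x a i)) / -∑ i ∈ s a, x a i) l (𝓝 1) := by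
  have hupper : Tendsto (fun a => (1 - M a)⁻¹) l (𝓝 1) := by
    simpa using (tendsto_const_nhds.sub hM).inv₀ (by norm_num : (1 : ℝ) - 0 ≠ 0)
  have hM1 : ∀ᶠ a in l, M a < 1 := hM.eventually (gt_mem_nhds one_pos)
  refine tendsto_of_tendsto_of_tendsto_of_le_of_le' tendsto_const_nhds hupper ?_ ?_
  all_goals filter_upwards [hx, hS, hM1] with a hxa hSa hMa
  · rw [le_div_iff_of_neg (neg_neg_of_pos hSa), one_mul]
    exact sum_log_one_sub_le_neg_sum _ _ fun i hi => (hxa i hi).2.trans_lt hMa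
  · rw [div_le_iff_of_neg (neg_neg_of_pos hSa), ← div_eq_inv_mul]
    exact neg_sum_div_le_sum_log_one_sub _ _ (fun i hi => (hxa i hi).1)
      (fun i hi => (hxa i hi).2) hMa

theorem sub_one_sq_mul_sum_range_succ_mul_pow_succ (r : ℝ) (n : ℕ) :
    (r - 1) ^ 2 * ∑ k ∈ Finset.range n, ((k : ℝ) + 1) * r ^ (k + 1)
      = r * (n * r ^ (n + 1) - (n + 1) * r ^ n + 1) := by
  induction n with
  | zero => simp
  | succ n ih =>
    rw [Finset.sum_range_succ, mul_add, ih]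
    push_cast
    ring

theorem Real.sub_one_sub_log_le_sq {t : ℝ} (ht : 1 ≤ t) : t - 1 - Real.log t ≤ (t - 1) ^ 2 := by
  have ht0 : 0 < t := by linarith
  have hlog := Real.one_sub_inv_le_log_of_pos ht0
  have h : t - 1 - (1 - t⁻¹) = (t - 1) ^ 2 / t := by field_simp
  have h' : (t - 1) ^ 2 / t ≤ (t - 1) ^ 2 := div_le_self (sq_nonneg _) ht
  linarith

section Sequences

variable {m : ℕ → ℝ}

theorem tendsto_natCast_mul_sub_one_atTop (hm : ∀ n, 0 < m n)
    (hmn : Tendsto (fun n : ℕ => m n ^ n) atTop atTop) :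
    Tendsto (fun n : ℕ => (n : ℝ) * (m n - 1)) atTop atTop := by
  have hlog : Tendsto (fun n : ℕ => (n : ℝ) * Real.log (m n)) atTop atTop :=
    (Real.tendsto_log_atTop.comp hmn).congr fun n => by simp [Real.log_pow]
  refine tendsto_atTop_mono (fun n => ?_) hlog
  exact mul_le_mul_of_nonneg_left (Real.log_le_sub_one_of_pos (hm n)) n.cast_nonneg

theorem tendsto_natCast_mul_sub_one_sub_log (hm : ∀ n, 1 ≤ m n)
    (hm2 : Tendsto (fun n : ℕ => (n : ℝ) * (m n - 1) ^ 2) atTop (𝓝 0)) :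
    Tendsto (fun n : ℕ => (n : ℝ) * (m n - 1 - Real.log (m n))) atTop (𝓝 0) := by
  refine tendsto_of_tendsto_of_tendsto_of_le_of_le tendsto_const_nhds hm2
    (fun n => ?_) (fun n => ?_)
  · have := Real.log_le_sub_one_of_pos (zero_lt_one.trans_le (hm n))
    exact mul_nonneg n.cast_nonneg (by linarith)
  · exact mul_le_mul_of_nonneg_left (Real.sub_one_sub_log_le_sq (hm n)) n.cast_nonneg

theorem tendsto_pow_sub_one_div_natCast_mul_sub_one_mul_pow {r : ℕ → ℝ} (hr : ∀ n, 1 < r n)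
    (hnr : Tendsto (fun n : ℕ => (n : ℝ) * (r n - 1)) atTop atTop) :
    Tendsto (fun n : ℕ => (r n ^ n - 1) / (n * (r n - 1) * r n ^ n)) atTop (𝓝 0) := by
  refine tendsto_of_tendsto_of_tendsto_of_le_of_le' tendsto_const_nhds hnr.inv_tendsto_atTop ?_ ?_
  all_goals filter_upwards [eventually_gt_atTop 0] with n hn
  all_goals have hr1 : 0 < r n - 1 := sub_pos.mpr (hr n)
  all_goals have hrn : 1 ≤ r n ^ n := one_le_pow₀ (hr n).le
  · have : (0 : ℝ) < n := by exact_mod_cast hn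
    have : 0 ≤ r n ^ n - 1 := sub_nonneg.mpr hrn
    positivity
  · have hrn0 : r n ^ n ≠ 0 := by positivity
    calc (r n ^ n - 1) / (n * (r n - 1) * r n ^ n)
        = (1 - (r n ^ n)⁻¹) * ((n : ℝ) * (r n - 1))⁻¹ := by field_simp
      _ ≤ 1 * ((n : ℝ) * (r n - 1))⁻¹ := by
        gcongr
        exact sub_le_self 1 (by positivity)
      _ = ((n : ℝ) * (r n - 1))⁻¹ := one_mul _

end Sequences

namespace CdfFurtherEquivalence

/-- The `k`-th summand of `aₙ`, with `t` standing for `mₙ`. -/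
noncomputable def term (q χ t : ℝ) (n k : ℕ) : ℝ :=
  ((k : ℝ) + 1) * t ^ (2 * (k : ℝ) + 2 - 2 * q * ((n : ℝ) + χ)) / (q * ((n : ℝ) + χ))

section Pointwise

variable {q χ t : ℝ} {n k : ℕ}

theorem natCast_add_pos (hχ : 0 ≤ χ) (hk : k < n) : 0 < (n : ℝ) + χ := by
  have : (1 : ℝ) ≤ n := by exact_mod_cast hk.pos
  linarith

theorem term_pos (hq : 0 < q) (hχ : 0 ≤ χ) (ht : 0 < t) (hk : k < n) :
    0 < term q χ t n k := by
  have := natCast_add_pos hχ hk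
  unfold term
  positivity

theorem term_le (hq : 1 < q) (hχ : 0 ≤ χ) (ht : 1 < t) (hk : k < n) :
    term q χ t n k ≤ (t ^ n) ^ (-(2 * q - 2)) / q := by
  have hnχ := natCast_add_pos hχ hk
  have hkn : (k : ℝ) + 1 ≤ n := by exact_mod_cast hk
  have hfrac : ((k : ℝ) + 1) / (n + χ) ≤ 1 := div_le_one_of_le₀ (by linarith) hnχ.le
  have hpow : t ^ (2 * (k : ℝ) + 2 - 2 * q * ((n : ℝ) + χ)) ≤ (t ^ n) ^ (-(2 * q - 2)) := by
    rw [← Real.rpow_natCast, ← Real.rpow_mul (by linarith)]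
    exact Real.rpow_le_rpow_of_exponent_le ht.le (by nlinarith)
  calc term q χ t n k
      = ((k : ℝ) + 1) / (n + χ) * t ^ (2 * (k : ℝ) + 2 - 2 * q * ((n : ℝ) + χ)) / q := by
        unfold term; field_simp
    _ ≤ 1 * (t ^ n) ^ (-(2 * q - 2)) / q := by gcongr
    _ = (t ^ n) ^ (-(2 * q - 2)) / q := by rw [one_mul]

theorem sum_term_pos (hq : 0 < q) (hχ : 0 ≤ χ) (ht : 0 < t) (hn : 0 < n) :
    0 < ∑ k ∈ Finset.range n, term q χ t n k :=
  Finset.sum_pos (fun _ hk => term_pos hq hχ ht (Finset.mem_range.mp hk))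
    (Finset.nonempty_range_iff.mpr hn.ne')

theorem rpow_eq_sq_pow_mul_rpow (ht : 0 < t) (k : ℕ) :
    t ^ (2 * (k : ℝ) + 2 - 2 * q * ((n : ℝ) + χ))
      = (t ^ 2) ^ (k + 1) * t ^ (-(2 * q * ((n : ℝ) + χ))) := by
  rw [show 2 * (k : ℝ) + 2 - 2 * q * ((n : ℝ) + χ)
      = ((2 * (k + 1) : ℕ) : ℝ) + -(2 * q * ((n : ℝ) + χ)) by push_cast; ring,
    Real.rpow_add ht, Real.rpow_natCast, pow_mul]

theorem sum_term_mul_eq (hq : 0 < q) (hχ : 0 ≤ χ) (ht : 1 < t) (hn : 0 < n) :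
    (∑ k ∈ Finset.range n, term q χ t n k) * (2 * q * (t - 1))
      = 2 / (t + 1) * (n / (n + χ)) * t ^ (2 * (n : ℝ) + 2 - 2 * q * ((n : ℝ) + χ))
        * (1 - ((t ^ 2) ^ n - 1) / (n * (t ^ 2 - 1) * (t ^ 2) ^ n)) := by
  have ht0 : 0 < t := by linarith
  have hnχ := natCast_add_pos (k := 0) hχ hn
  have hr : 0 < t ^ 2 - 1 := by nlinarith
  have hsum : ∑ k ∈ Finset.range n, term q χ t n k
      = (∑ k ∈ Finset.range n, ((k : ℝ) + 1) * (t ^ 2) ^ (k + 1))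
        * (t ^ (-(2 * q * ((n : ℝ) + χ))) / (q * (n + χ))) := by
    rw [Finset.sum_mul]
    refine Finset.sum_congr rfl fun k _ => ?_
    rw [term, rpow_eq_sq_pow_mul_rpow ht0]
    ring
  have hgeom := sub_one_sq_mul_sum_range_succ_mul_pow_succ (t ^ 2) n
  rw [mul_comm, ← eq_div_iff (by positivity)] at hgeom
  rw [hsum, hgeom, rpow_eq_sq_pow_mul_rpow ht0, pow_succ]
  have : (n : ℝ) ≠ 0 := by positivity
  field_simp
  ring

end Pointwise

section Limits

variable {q χ : ℝ} {m : ℕ → ℝ}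

theorem tendsto_sum_log_one_sub_term_div (hq : 1 < q) (hχ : 0 ≤ χ) (hm1 : ∀ n, 1 < m n)
    (hmn : Tendsto (fun n : ℕ => m n ^ n) atTop atTop) :
    Tendsto (fun n : ℕ => (∑ k ∈ Finset.range n, Real.log (1 - term q χ (m n) n k)) /
      -∑ k ∈ Finset.range n, term q χ (m n) n k) atTop (𝓝 1) := by
  have hq0 : 0 < q := by linarith
  have hM : Tendsto (fun n => (m n ^ n) ^ (-(2 * q - 2)) / q) atTop (𝓝 0) := by
    have := ((tendsto_rpow_neg_atTop (by linarith : 0 < 2 * q - 2)).comp hmn).div_const q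
    rwa [zero_div] at this
  have hS : ∀ᶠ n in atTop, 0 < ∑ k ∈ Finset.range n, term q χ (m n) n k := by
    filter_upwards [eventually_gt_atTop 0] with n hn
    exact sum_term_pos hq0 hχ (by linarith [hm1 n]) hn
  refine tendsto_sum_log_one_sub_div_neg_sum hM (Eventually.of_forall fun n k hk => ?_) hS
  have hk := Finset.mem_range.mp hk
  exact ⟨(term_pos hq0 hχ (by linarith [hm1 n]) hk).le, term_le hq hχ (hm1 n) hk⟩

theorem tendsto_exp_mul_rpow (hm1 : ∀ n, 1 < m n) (hml : Tendsto m atTop (𝓝 1))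
    (hm2 : Tendsto (fun n : ℕ => (n : ℝ) * (m n - 1) ^ 2) atTop (𝓝 0)) :
    Tendsto (fun n : ℕ => Real.exp (2 * (q - 1) * n * (m n - 1))
      * m n ^ (2 * (n : ℝ) + 2 - 2 * q * ((n : ℝ) + χ))) atTop (𝓝 1) := by
  have hgap := tendsto_natCast_mul_sub_one_sub_log (fun n => (hm1 n).le) hm2
  have hlog : Tendsto (fun n => Real.log (m n)) atTop (𝓝 0) := by
    simpa [Function.comp_def] using (Real.continuousAt_log one_ne_zero).tendsto.comp hml
  have hexp := Real.continuous_exp.continuousAt.tendsto.comp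
    (((tendsto_const_nhds (x := 2 * (q - 1))).mul hgap).add
      ((tendsto_const_nhds (x := 2 - 2 * q * χ)).mul hlog))
  simp only [mul_zero, add_zero, Real.exp_zero] at hexp
  refine hexp.congr fun n => ?_
  rw [Function.comp_apply, Real.rpow_def_of_pos (by linarith [hm1 n]), ← Real.exp_add]
  ring_nf

theorem tendsto_sum_term_mul (hq : 0 < q) (hχ : 0 ≤ χ) (hm1 : ∀ n, 1 < m n)
    (hml : Tendsto m atTop (𝓝 1)) (hmn : Tendsto (fun n : ℕ => m n ^ n) atTop atTop)
    (hm2 : Tendsto (fun n : ℕ => (n : ℝ) * (m n - 1) ^ 2) atTop (𝓝 0)) :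
    Tendsto (fun n : ℕ => (∑ k ∈ Finset.range n, term q χ (m n) n k) * (2 * q * (m n - 1))
      * Real.exp (2 * (q - 1) * n * (m n - 1))) atTop (𝓝 1) := by
  have h2 : Tendsto (fun n => 2 / (m n + 1)) atTop (𝓝 1) := by
    have := (tendsto_const_nhds (x := (2 : ℝ))).div (hml.add_const 1) (by norm_num)
    norm_num at this
    exact this
  have hsq : Tendsto (fun n : ℕ => (n : ℝ) * (m n ^ 2 - 1)) atTop atTop := by
    refine tendsto_atTop_mono (fun n => ?_)
      (tendsto_natCast_mul_sub_one_atTop (fun n => by linarith [hm1 n]) hmn)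
    exact mul_le_mul_of_nonneg_left (by nlinarith [hm1 n]) n.cast_nonneg
  have hcorr := (tendsto_pow_sub_one_div_natCast_mul_sub_one_mul_pow
    (r := fun n => m n ^ 2) (fun n => by nlinarith [hm1 n]) hsq).const_sub 1
  rw [sub_zero] at hcorr
  have hprod := ((h2.mul (tendsto_natCast_div_add_atTop χ)).mul
    (tendsto_exp_mul_rpow (q := q) (χ := χ) hm1 hml hm2)).mul hcorr
  simp only [mul_one] at hprod
  refine hprod.congr' ?_
  filter_upwards [eventually_gt_atTop 0] with n hn
  rw [sum_term_mul_eq hq hχ (hm1 n) hn]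
  ring

end Limits
end CdfFurtherEquivalence

open CdfFurtherEquivalence in
theorem cdfFurtherEquivalence
    (q χ : ℝ) (hq : 1 < q) (hχ : 0 ≤ χ) (m : ℕ → ℝ)
    (hm1 : ∀ n, 1 < m n)
    (hml : Tendsto m atTop (𝓝 1))
    (hmn : Tendsto (fun n : ℕ => m n ^ n) atTop atTop)
    (hm2 : Tendsto (fun n : ℕ => (n : ℝ) * (m n - 1) ^ 2) atTop (𝓝 0)) :
    Tendsto (fun n : ℕ =>
        (∑ k ∈ Finset.range n,
          Real.log (1 - ((k : ℝ) + 1) *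
            m n ^ (2 * (k : ℝ) + 2 - 2 * q * ((n : ℝ) + χ)) / (q * ((n : ℝ) + χ)))) /
        (-(1 / (2 * q)) *
          (1 / (Real.exp (2 * (q - 1) * (n : ℝ) * (m n - 1)) * (m n - 1)))))
      atTop (𝓝 1) := by
  have hq0 : 0 < q := by linarith
  have hprod := (tendsto_sum_log_one_sub_term_div hq hχ hm1 hmn).mul
    (tendsto_sum_term_mul hq0 hχ hm1 hml hmn hm2)
  rw [one_mul] at hprod
  refine hprod.congr' ?_
  filter_upwards [eventually_gt_atTop 0] with n hn
  have hS := sum_term_pos (t := m n) hq0 hχ (by linarith [hm1 n]) hn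
  have hm : m n - 1 ≠ 0 := by linarith [hm1 n]
  change _ = (∑ k ∈ Finset.range n, Real.log (1 - term q χ (m n) n k)) / _
  field_simp
end

section
/- Let χ ≥ 0, R ∈ (0,1), and let V : [0,1] → [0,∞] be measurable with V(r) = 0 for every r ∈ [R,1]. For n ≥ 1 and 0 ≤ k ≤ n−1 define a_k⁽ⁿ⁾ > 0 by (a_k⁽ⁿ⁾)^{−1} = 2π ∫_0^1 r^{2k+1} e^{−2(n+χ) V(r)} dr (with e^{−∞} = 0), and define Kₙ(z, w) = ∑_{k=0}^{n−1} a_k⁽ⁿ⁾ z^k (conj w)^k. Then the functions (α, β) ↦ (π/n²) Kₙ(1 − α/n, 1 − β/n) converge, as n → ∞, uniformly on every compact subset of ℂ × ℂ to the function (α, β) ↦ ∫_0^1 t e^{−(α + conj β) t} dt. -/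
open Filter Topology MeasureTheory

/-!
Put `c_k = π a_k⁽ⁿ⁾`. The weight `e^{-2(n+χ)V}` lies in `[0,1]` and equals `1` on `[R,1]`, so the
moment `∫_0^1 r^{2k+1} e^{-2(n+χ)V}` lies between `(1 - R^{2k+2})/(2k+2)` and `1/(2k+2)`; hence
`|c_k - (k+1)| ≤ (1 - R²)⁻¹` uniformly in `n` and `k`, and replacing `c_k` by `k+1` moves the
normalised kernel by `O(1/n)`. With `s = α + conj β`, the product `(1 - α/n)(1 - conj β/n)` is
`e^{-s/n} + O(1/n²)`, so for `k < n` its `k`-th power is `e^{-sk/n} + O(1/n)`. Finally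
`n⁻² ∑_{k<n} (k+1) e^{-sk/n}` is, up to `O(1/n)`, a Riemann sum of the Lipschitz function
`t ↦ t e^{-st}` on `[0,1]`. All constants depend only on a bound for `|α|` and `|β|`.
-/

/-- `expNegE v = e^{-v}` for `v ∈ [0,∞]`, with `e^{-∞} = 0`. -/
noncomputable def expNegE (v : ENNReal) : ℝ :=
  if v = ⊤ then 0 else Real.exp (-v.toReal)

lemma expNegE_nonneg (v : ENNReal) : 0 ≤ expNegE v := by
  unfold expNegE; split_ifs <;> positivity

lemma expNegE_le_one (v : ENNReal) : expNegE v ≤ 1 := by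
  unfold expNegE; split_ifs
  · exact zero_le_one
  · exact Real.exp_le_one_iff.2 (neg_nonpos.2 ENNReal.toReal_nonneg)

lemma expNegE_zero : expNegE 0 = 1 := by simp [expNegE]

lemma measurable_expNegE : Measurable expNegE :=
  Measurable.ite (measurableSet_singleton ⊤) measurable_const
    (Real.measurable_exp.comp ENNReal.measurable_toReal.neg)

lemma natCast_mul_pow_mul_one_sub_le {x : ℝ} (hx0 : 0 ≤ x) (hx1 : x ≤ 1) (j : ℕ) :
    j * x ^ j * (1 - x) ≤ 1 - x ^ j :=
  calc j * x ^ j * (1 - x) = (1 - x) * ∑ _i ∈ Finset.range j, x ^ j := by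
        rw [Finset.sum_const, Finset.card_range, nsmul_eq_mul]; ring
    _ ≤ (1 - x) * ∑ i ∈ Finset.range j, x ^ i :=
      mul_le_mul_of_nonneg_left (Finset.sum_le_sum fun i hi =>
        pow_le_pow_of_le_one hx0 hx1 (Finset.mem_range.1 hi).le) (by linarith)
    _ = 1 - x ^ j := mul_neg_geom_sum x j

lemma abs_inv_two_mul_sub_natCast_le {x I : ℝ} {j : ℕ} (hj : 0 < j) (hx0 : 0 ≤ x) (hx1 : x < 1)
    (hlow : (1 - x ^ j) / (2 * j) ≤ I) (hup : I ≤ 1 / (2 * j)) :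
    |(2 * I)⁻¹ - j| ≤ (1 - x)⁻¹ := by
  have hj' : (0 : ℝ) < j := Nat.cast_pos.2 hj
  have hxj : 0 < 1 - x ^ j := sub_pos.2 (pow_lt_one₀ hx0 hx1 hj.ne')
  have hI : 0 < I := (div_pos hxj (by positivity)).trans_le hlow
  have hlow' : j ≤ (2 * I)⁻¹ := by
    rw [le_inv_comm₀ hj' (by positivity)]
    rw [le_div_iff₀ (by positivity)] at hup
    rw [inv_eq_one_div, le_div_iff₀ hj']
    linarith
  have hup' : (2 * I)⁻¹ ≤ j / (1 - x ^ j) := by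
    rw [inv_le_comm₀ (by positivity) (by positivity), inv_div]
    rw [div_le_iff₀ (by positivity)] at hlow
    rw [div_le_iff₀ hj']
    linarith
  have key : j / (1 - x ^ j) - j ≤ (1 - x)⁻¹ := by
    have := natCast_mul_pow_mul_one_sub_le hx0 hx1.le j
    rw [div_sub' hxj.ne', inv_eq_one_div, div_le_div_iff₀ hxj (by linarith)]
    nlinarith
  rw [abs_le]
  constructor <;> nlinarith [inv_pos.2 (sub_pos.2 hx1)]

section Moments

variable {w : ℝ → ℝ}

lemma integrableOn_pow_mul_Icc (hw : Measurable w) (hw0 : ∀ r, 0 ≤ w r) (hw1 : ∀ r, w r ≤ 1)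
    (m : ℕ) (a b : ℝ) : IntegrableOn (fun r => r ^ m * w r) (Set.Icc a b) :=
  Integrable.mul_bdd (f := fun r : ℝ => r ^ m) (continuous_pow m).integrableOn_Icc
    hw.aestronglyMeasurable
    (Eventually.of_forall fun r => by rw [Real.norm_of_nonneg (hw0 r)]; exact hw1 r)

lemma setIntegral_Icc_pow (m : ℕ) {a b : ℝ} (hab : a ≤ b) :
    ∫ r in Set.Icc a b, r ^ m = (b ^ (m + 1) - a ^ (m + 1)) / (m + 1) := by
  rw [integral_Icc_eq_integral_Ioc, ← intervalIntegral.integral_of_le hab, integral_pow]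

lemma setIntegral_pow_mul_le (hw : Measurable w) (hw0 : ∀ r, 0 ≤ w r) (hw1 : ∀ r, w r ≤ 1)
    (m : ℕ) : ∫ r in Set.Icc (0 : ℝ) 1, r ^ m * w r ≤ 1 / (m + 1) := by
  calc ∫ r in Set.Icc (0 : ℝ) 1, r ^ m * w r ≤ ∫ r in Set.Icc (0 : ℝ) 1, r ^ m :=
        setIntegral_mono_on (integrableOn_pow_mul_Icc hw hw0 hw1 m 0 1)
          (continuous_pow m).integrableOn_Icc measurableSet_Icc fun r hr =>
            mul_le_of_le_one_right (pow_nonneg hr.1 m) (hw1 r)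
    _ = 1 / (m + 1) := by simp [setIntegral_Icc_pow m zero_le_one]

lemma one_sub_pow_div_le_setIntegral_pow_mul (hw : Measurable w) (hw0 : ∀ r, 0 ≤ w r)
    (hw1 : ∀ r, w r ≤ 1) {R : ℝ} (hR0 : 0 ≤ R) (hR1 : R ≤ 1) (hwR : ∀ r ∈ Set.Icc R 1, w r = 1)
    (m : ℕ) : (1 - R ^ (m + 1)) / (m + 1) ≤ ∫ r in Set.Icc (0 : ℝ) 1, r ^ m * w r := by
  calc (1 - R ^ (m + 1)) / (m + 1) = ∫ r in Set.Icc R 1, r ^ m * w r := by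
        rw [setIntegral_congr_fun measurableSet_Icc fun r hr => by rw [hwR r hr, mul_one],
          setIntegral_Icc_pow m hR1, one_pow]
    _ ≤ ∫ r in Set.Icc (0 : ℝ) 1, r ^ m * w r :=
        setIntegral_mono_set (integrableOn_pow_mul_Icc hw hw0 hw1 m 0 1)
          ((ae_restrict_iff' measurableSet_Icc).2 (Eventually.of_forall fun r hr =>
            mul_nonneg (pow_nonneg hr.1 m) (hw0 r)))
          (Set.Icc_subset_Icc_left hR0).eventuallyLE

lemma abs_pi_mul_inv_two_pi_mul_setIntegral_sub_le (hw : Measurable w) (hw0 : ∀ r, 0 ≤ w r)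
    (hw1 : ∀ r, w r ≤ 1) {R : ℝ} (hR0 : 0 ≤ R) (hR1 : R < 1) (hwR : ∀ r ∈ Set.Icc R 1, w r = 1)
    (k : ℕ) :
    |Real.pi * (2 * Real.pi * ∫ r in Set.Icc (0 : ℝ) 1, r ^ (2 * k + 1) * w r)⁻¹ - (k + 1)|
      ≤ (1 - R ^ 2)⁻¹ := by
  have hlow := one_sub_pow_div_le_setIntegral_pow_mul hw hw0 hw1 hR0 hR1.le hwR (2 * k + 1)
  have hup := setIntegral_pow_mul_le hw hw0 hw1 (2 * k + 1)
  rw [show 2 * k + 1 + 1 = 2 * (k + 1) by ring, pow_mul] at hlow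
  have h2 : ((2 * k + 1 : ℕ) : ℝ) + 1 = 2 * ((k + 1 : ℕ) : ℝ) := by push_cast; ring
  rw [h2] at hlow hup
  have := abs_inv_two_mul_sub_natCast_le k.succ_pos (sq_nonneg R)
    (by nlinarith : R ^ 2 < 1) hlow hup
  convert this using 2
  field_simp
  push_cast
  ring

end Moments

lemma norm_pow_sub_pow_le {A : Type*} [NormedCommRing A] [NormOneClass A] {a b : A} {ρ : ℝ}
    (ha : ‖a‖ ≤ ρ) (hb : ‖b‖ ≤ ρ) (k : ℕ) : ‖a ^ k - b ^ k‖ ≤ k * ρ ^ (k - 1) * ‖a - b‖ := by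
  have hρ : 0 ≤ ρ := (norm_nonneg a).trans ha
  have hterm : ∀ i ∈ Finset.range k, ‖a ^ i * b ^ (k - 1 - i)‖ ≤ ρ ^ (k - 1) := fun i hi => by
    have hik : i + (k - 1 - i) = k - 1 := by have := Finset.mem_range.1 hi; omega
    calc ‖a ^ i * b ^ (k - 1 - i)‖ ≤ ‖a‖ ^ i * ‖b‖ ^ (k - 1 - i) :=
          (norm_mul_le _ _).trans (mul_le_mul (norm_pow_le _ _) (norm_pow_le _ _)
            (norm_nonneg _) (by positivity))
      _ ≤ ρ ^ i * ρ ^ (k - 1 - i) := by gcongr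
      _ = ρ ^ (k - 1) := by rw [← pow_add, hik]
  rw [← geom_sum₂_mul]
  refine (norm_mul_le _ _).trans (mul_le_mul_of_nonneg_right ?_ (norm_nonneg _))
  simpa using norm_sum_le_of_le _ hterm

lemma norm_one_sub_mul_one_sub_sub_exp_le {a b : ℂ} (hab : ‖a + b‖ ≤ 1) :
    ‖(1 - a) * (1 - b) - Complex.exp (-(a + b))‖ ≤ ‖a + b‖ ^ 2 + ‖a‖ * ‖b‖ := by
  have h := Complex.norm_exp_sub_one_sub_id_le (x := -(a + b)) (by rwa [norm_neg])
  rw [norm_neg] at h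
  calc ‖(1 - a) * (1 - b) - Complex.exp (-(a + b))‖
      = ‖-(Complex.exp (-(a + b)) - 1 - -(a + b)) + a * b‖ := by ring_nf
    _ ≤ ‖a + b‖ ^ 2 + ‖a‖ * ‖b‖ := by
      refine (norm_add_le _ _).trans (add_le_add ?_ (norm_mul_le _ _))
      rwa [norm_neg]

lemma norm_one_sub_le_exp_norm (a : ℂ) : ‖1 - a‖ ≤ Real.exp ‖a‖ := by
  calc ‖1 - a‖ ≤ ‖a‖ + 1 := by simpa [add_comm] using norm_sub_le (1 : ℂ) a
    _ ≤ Real.exp ‖a‖ := Real.add_one_le_exp _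

lemma norm_sum_mul_pow_sub_sum_mul_pow_le {c : ℕ → ℝ} {D : ℝ}
    (hc : ∀ k, |c k - (k + 1)| ≤ D) {q e : ℂ} {ρ δ : ℝ} (hq : ‖q‖ ≤ ρ) (he : ‖e‖ ≤ ρ)
    (hρ : 1 ≤ ρ) (hqe : ‖q - e‖ ≤ δ) (n : ℕ) :
    ‖∑ k ∈ Finset.range n, (c k : ℂ) * q ^ k - ∑ k ∈ Finset.range n, ((k : ℂ) + 1) * e ^ k‖
      ≤ n * ((D + n ^ 2 * δ) * ρ ^ n) := by
  rw [← Finset.sum_sub_distrib]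
  calc _ ≤ ∑ _k ∈ Finset.range n, (D + n ^ 2 * δ) * ρ ^ n :=
        norm_sum_le_of_le _ fun k hk => ?_
    _ = _ := by simp
  have hkn : k < n := Finset.mem_range.1 hk
  have hρk : ρ ^ k ≤ ρ ^ n := pow_le_pow_right₀ hρ hkn.le
  have hρk' : ρ ^ (k - 1) ≤ ρ ^ n := pow_le_pow_right₀ hρ (by omega)
  have hk1 : (k : ℝ) + 1 ≤ n := by exact_mod_cast hkn
  calc ‖(c k : ℂ) * q ^ k - ((k : ℂ) + 1) * e ^ k‖
      = ‖((c k - (k + 1) : ℝ) : ℂ) * q ^ k + ((k + 1 : ℝ) : ℂ) * (q ^ k - e ^ k)‖ := by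
        push_cast; ring_nf
    _ ≤ D * ρ ^ n + n * (n * ρ ^ n * δ) := by
      refine (norm_add_le _ _).trans (add_le_add ?_ ?_) <;> rw [norm_mul, Complex.norm_real]
      · exact mul_le_mul (hc k)
          ((norm_pow_le _ _).trans ((pow_le_pow_left₀ (norm_nonneg _) hq k).trans hρk))
          (norm_nonneg _) ((abs_nonneg _).trans (hc k))
      · rw [Real.norm_of_nonneg (by positivity)]
        gcongr
        refine (norm_pow_sub_pow_le hq he k).trans ?_
        gcongr
    _ = (D + n ^ 2 * δ) * ρ ^ n := by ring

lemma LipschitzOnWith.norm_riemannSum_sub_integral_le {E : Type*} [NormedAddCommGroup E]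
    [NormedSpace ℝ E] [CompleteSpace E] {g : ℝ → E} {L : NNReal}
    (hg : LipschitzOnWith L g (Set.Icc 0 1)) {n : ℕ} (hn : 0 < n) :
    ‖(n : ℝ)⁻¹ • ∑ k ∈ Finset.range n, g (k / n) - ∫ t in (0 : ℝ)..1, g t‖ ≤ L / n := by
  have hn' : (0 : ℝ) < n := Nat.cast_pos.2 hn
  set a : ℕ → ℝ := fun k => k / n
  have ha_mem : ∀ k ≤ n, a k ∈ Set.Icc (0 : ℝ) 1 := fun k hk =>
    ⟨by positivity, div_le_one_of_le₀ (by exact_mod_cast hk) hn'.le⟩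
  have hstep : ∀ k, a (k + 1) - a k = (n : ℝ)⁻¹ := fun k => by
    simp only [a]; push_cast; field_simp; ring
  have hint : ∀ k < n, IntervalIntegrable g volume (a k) (a (k + 1)) := fun k hk =>
    (hg.continuousOn.mono
      (Set.uIcc_subset_Icc (ha_mem k hk.le) (ha_mem (k + 1) hk))).intervalIntegrable
  have hsum : ∫ t in (0 : ℝ)..1, g t = ∑ k ∈ Finset.range n, ∫ t in a k..a (k + 1), g t := by
    rw [intervalIntegral.sum_integral_adjacent_intervals hint]
    simp [a, hn'.ne']
  have hcell : ∀ k ∈ Finset.range n,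
      ‖(n : ℝ)⁻¹ • g (a k) - ∫ t in a k..a (k + 1), g t‖ ≤ L / n * (n : ℝ)⁻¹ := fun k hk => by
    have hk := Finset.mem_range.1 hk
    have hle : a k ≤ a (k + 1) := by linarith [hstep k, inv_pos.2 hn']
    rw [← hstep k, ← intervalIntegral.integral_const,
      ← intervalIntegral.integral_sub intervalIntegrable_const (hint k hk)]
    refine (intervalIntegral.norm_integral_le_of_norm_le_const fun t ht => ?_).trans_eq
      (by rw [abs_of_nonneg (sub_nonneg.2 hle), hstep])
    rw [Set.uIoc_of_le hle] at ht
    have ht' : t ∈ Set.Icc (0 : ℝ) 1 :=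
      ⟨(ha_mem k hk.le).1.trans ht.1.le, ht.2.trans (ha_mem _ hk).2⟩
    calc ‖g (a k) - g t‖ ≤ L * ‖a k - t‖ := by
          rw [← dist_eq_norm, ← dist_eq_norm]
          exact hg.dist_le_mul _ (ha_mem k hk.le) _ ht'
      _ ≤ L * (n : ℝ)⁻¹ := by
          gcongr
          rw [Real.norm_eq_abs, abs_sub_comm, abs_of_nonneg (by linarith [ht.1])]
          linarith [ht.2, hstep k]
      _ = L / n := by ring
  rw [hsum, Finset.smul_sum, ← Finset.sum_sub_distrib]
  refine (norm_sum_le_of_le _ hcell).trans_eq ?_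
  simp only [Finset.sum_const, Finset.card_range, nsmul_eq_mul]
  field_simp

lemma lipschitzOnWith_ofReal_mul_cexp (s : ℂ) :
    LipschitzOnWith (Real.toNNReal ((1 + ‖s‖) * Real.exp ‖s‖))
      (fun t : ℝ => (t : ℂ) * Complex.exp (-s * t)) (Set.Icc 0 1) := by
  refine (convex_Icc 0 1).lipschitzOnWith_of_nnnorm_hasDerivWithin_le
    (f' := fun t : ℝ => Complex.exp (-s * t) * (1 - s * t)) (fun t _ => ?_) (fun t ht => ?_)
  · have hid : HasDerivAt (fun t : ℝ => (t : ℂ)) 1 t := (hasDerivAt_id t).ofReal_comp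
    have hexp : HasDerivAt (fun t : ℝ => Complex.exp (-s * t))
        (Complex.exp (-s * t) * (-s * 1)) t := (hid.const_mul (-s)).cexp
    exact (hid.mul hexp).hasDerivWithinAt.congr_deriv (by ring)
  · rw [← NNReal.coe_le_coe, coe_nnnorm, Real.coe_toNNReal _ (by positivity), norm_mul,
      mul_comm]
    have hst : ‖s * t‖ ≤ ‖s‖ := by
      rw [norm_mul, Complex.norm_real, Real.norm_of_nonneg ht.1]
      exact mul_le_of_le_one_right (norm_nonneg s) ht.2
    gcongr
    · exact (norm_sub_le _ _).trans (by rw [norm_one]; linarith)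
    · refine (Complex.norm_exp_le_exp_norm _).trans (Real.exp_le_exp.2 ?_)
      rwa [neg_mul, norm_neg]

lemma norm_sum_succ_mul_exp_pow_sub_integral_le {s : ℂ} {S : ℝ} (hs : ‖s‖ ≤ S) {n : ℕ}
    (hn : 0 < n) :
    ‖((n : ℂ) ^ 2)⁻¹ * ∑ k ∈ Finset.range n, ((k : ℂ) + 1) * Complex.exp (-s / n) ^ k
      - ∫ t in (0 : ℝ)..1, (t : ℂ) * Complex.exp (-s * t)‖ ≤ (2 + S) * Real.exp S / n := by
  have hn' : (0 : ℝ) < n := Nat.cast_pos.2 hn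
  set g : ℝ → ℂ := fun t => (t : ℂ) * Complex.exp (-s * t)
  have hpow : ∀ k : ℕ, Complex.exp (-s / n) ^ k = Complex.exp (-s * (k / n : ℝ)) := fun k => by
    rw [← Complex.exp_nat_mul]; push_cast; ring_nf
  have hsplit :
      ((n : ℂ) ^ 2)⁻¹ * ∑ k ∈ Finset.range n, ((k : ℂ) + 1) * Complex.exp (-s / n) ^ k
      = (n : ℝ)⁻¹ • ∑ k ∈ Finset.range n, g (k / n)
        + ((n : ℂ) ^ 2)⁻¹ * ∑ k ∈ Finset.range n, Complex.exp (-s * (k / n : ℝ)) := by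
    simp only [g, hpow, Finset.smul_sum, Finset.mul_sum, ← Finset.sum_add_distrib,
      Complex.real_smul]
    refine Finset.sum_congr rfl fun k _ => ?_
    push_cast
    field_simp
  have hexp : ∀ k ∈ Finset.range n, ‖Complex.exp (-s * (k / n : ℝ))‖ ≤ Real.exp S :=
      fun k hk => by
    refine (Complex.norm_exp_le_exp_norm _).trans (Real.exp_le_exp.2 ?_)
    rw [norm_mul, norm_neg, Complex.norm_real, Real.norm_of_nonneg (by positivity)]
    exact (mul_le_of_le_one_right (norm_nonneg s)
      (div_le_one_of_le₀ (Nat.cast_le.2 (Finset.mem_range.1 hk).le) hn'.le)).trans hs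
  have hriemann := (lipschitzOnWith_ofReal_mul_cexp s).norm_riemannSum_sub_integral_le hn
  rw [Real.coe_toNNReal _ (by positivity)] at hriemann
  have hrest : ‖((n : ℂ) ^ 2)⁻¹ * ∑ k ∈ Finset.range n, Complex.exp (-s * (k / n : ℝ))‖
      ≤ Real.exp S / n := by
    rw [norm_mul, norm_inv, norm_pow, Complex.norm_natCast]
    calc ((n : ℝ) ^ 2)⁻¹ * ‖∑ k ∈ Finset.range n, Complex.exp (-s * (k / n : ℝ))‖
        ≤ ((n : ℝ) ^ 2)⁻¹ * (n * Real.exp S) := by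
          gcongr
          simpa using norm_sum_le_of_le _ hexp
      _ = Real.exp S / n := by field_simp
  rw [hsplit, add_sub_right_comm]
  refine (norm_add_le _ _).trans ?_
  have hS0 : 0 ≤ S := (norm_nonneg s).trans hs
  have hS : (1 + ‖s‖) * Real.exp ‖s‖ ≤ (1 + S) * Real.exp S := by gcongr
  calc _ ≤ (1 + S) * Real.exp S / n + Real.exp S / n := by
        gcongr
        exact hriemann.trans (by gcongr)
    _ = (2 + S) * Real.exp S / n := by ring

lemma norm_kernelSum_sub_integral_le {c : ℕ → ℝ} {D M : ℝ} (hc : ∀ k, |c k - (k + 1)| ≤ D)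
    {n : ℕ} (hn : 0 < n) (hMn : 2 * M ≤ n) {α γ : ℂ} (hα : ‖α‖ ≤ M) (hγ : ‖γ‖ ≤ M) :
    ‖((n : ℂ) ^ 2)⁻¹ * ∑ k ∈ Finset.range n, (c k : ℂ) * ((1 - α / n) * (1 - γ / n)) ^ k
      - ∫ t in (0 : ℝ)..1, (t : ℂ) * Complex.exp (-(α + γ) * t)‖
      ≤ (D + 5 * M ^ 2 + 2 + 2 * M) * Real.exp (2 * M) / n := by
  have hn' : (0 : ℝ) < n := Nat.cast_pos.2 hn
  have hM : 0 ≤ M := (norm_nonneg α).trans hα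
  set q := (1 - α / n) * (1 - γ / n)
  set e := Complex.exp (-(α + γ) / n)
  set ρ := Real.exp (2 * M / n)
  have hdiv : ∀ z : ℂ, ‖z‖ ≤ M → ‖z / n‖ ≤ M / n := fun z hz => by
    rw [norm_div, Complex.norm_natCast]; gcongr
  have hsum : ‖α / n + γ / n‖ ≤ 2 * M / n :=
    (norm_add_le _ _).trans ((add_le_add (hdiv α hα) (hdiv γ hγ)).trans_eq (by ring))
  have hq : ‖q‖ ≤ ρ := by
    refine (norm_mul_le _ _).trans ?_
    calc ‖1 - α / n‖ * ‖1 - γ / n‖ ≤ Real.exp (M / n) * Real.exp (M / n) := by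
          gcongr <;> refine (norm_one_sub_le_exp_norm _).trans (Real.exp_le_exp.2 (hdiv _ ‹_›))
      _ = ρ := by rw [← Real.exp_add, ← add_div, ← two_mul]
  have he : ‖e‖ ≤ ρ := by
    refine (Complex.norm_exp_le_exp_norm _).trans (Real.exp_le_exp.2 ?_)
    rwa [neg_div, norm_neg, add_div]
  have hρ : 1 ≤ ρ := Real.one_le_exp (by positivity)
  have hρn : ρ ^ n = Real.exp (2 * M) := by
    rw [← Real.exp_nat_mul]; field_simp
  have hqe : ‖q - e‖ ≤ 5 * M ^ 2 / n ^ 2 := by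
    have h := norm_one_sub_mul_one_sub_sub_exp_le (hsum.trans (by rwa [div_le_one hn']))
    rw [show -(α / n + γ / n) = -(α + γ) / n by ring] at h
    calc ‖q - e‖ ≤ ‖α / n + γ / n‖ ^ 2 + ‖α / n‖ * ‖γ / n‖ := h
      _ ≤ (2 * M / n) ^ 2 + M / n * (M / n) := by
          gcongr
          exacts [hdiv α hα, hdiv γ hγ]
      _ = 5 * M ^ 2 / n ^ 2 := by ring
  have hcomp := norm_sum_mul_pow_sub_sum_mul_pow_le hc hq he hρ hqe n
  have hriemann := norm_sum_succ_mul_exp_pow_sub_integral_le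
    ((norm_add_le α γ).trans (by linarith) : ‖α + γ‖ ≤ 2 * M) hn
  rw [hρn] at hcomp
  calc _ = ‖((n : ℂ) ^ 2)⁻¹ * (∑ k ∈ Finset.range n, (c k : ℂ) * q ^ k
          - ∑ k ∈ Finset.range n, ((k : ℂ) + 1) * e ^ k)
        + (((n : ℂ) ^ 2)⁻¹ * ∑ k ∈ Finset.range n, ((k : ℂ) + 1) * e ^ k
          - ∫ t in (0 : ℝ)..1, (t : ℂ) * Complex.exp (-(α + γ) * t))‖ := by congr 1; ring
    _ ≤ ((n : ℝ) ^ 2)⁻¹ * (n * ((D + n ^ 2 * (5 * M ^ 2 / n ^ 2)) * Real.exp (2 * M)))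
        + (2 + 2 * M) * Real.exp (2 * M) / n := by
      refine (norm_add_le _ _).trans (add_le_add ?_ hriemann)
      rw [norm_mul, norm_inv, norm_pow, Complex.norm_natCast]
      gcongr
    _ = (D + 5 * M ^ 2 + 2 + 2 * M) * Real.exp (2 * M) / n := by
      field_simp
      ring

lemma tendstoUniformlyOn_of_norm_sub_le_div {X E : Type*} [SeminormedAddCommGroup E]
    {F : ℕ → X → E} {f : X → E} {S : Set X} {C : ℝ}
    (h : ∀ᶠ n in atTop, ∀ x ∈ S, ‖F n x - f x‖ ≤ C / n) : TendstoUniformlyOn F f atTop S := by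
  rw [Metric.tendstoUniformlyOn_iff]
  intro ε hε
  filter_upwards [h, (tendsto_const_div_atTop_nhds_zero_nat C).eventually (gt_mem_nhds hε)]
    with n hn hCn x hx
  rw [dist_eq_norm']
  exact (hn x hx).trans_lt hCn

theorem generalLimitKernel_general
    (χ : ℝ) (R : ℝ) (hR0 : 0 < R) (hR1 : R < 1)
    (V : ℝ → ENNReal) (hVmeas : Measurable V)
    (hV0 : ∀ r ∈ Set.Icc R 1, V r = 0) :
    ∀ S : Set (ℂ × ℂ), IsCompact S →
      TendstoUniformlyOn
        (fun (n : ℕ) (p : ℂ × ℂ) =>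
          ((Real.pi : ℂ) / (n : ℂ) ^ 2) * ∑ k ∈ Finset.range n,
            (((2 * Real.pi * ∫ r in Set.Icc (0 : ℝ) 1,
                r ^ (2 * k + 1) *
                  expNegE (ENNReal.ofReal (2 * ((n : ℝ) + χ)) * V r))⁻¹ : ℝ) : ℂ) *
              (1 - p.1 / (n : ℂ)) ^ k * (starRingEnd ℂ (1 - p.2 / (n : ℂ))) ^ k)
        (fun p : ℂ × ℂ =>
          ∫ t in (0 : ℝ)..1, (t : ℂ) * Complex.exp (-(p.1 + starRingEnd ℂ p.2) * t))
        atTop S := by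
  intro S hS
  obtain ⟨M, hM⟩ := hS.isBounded.exists_norm_le
  refine tendstoUniformlyOn_of_norm_sub_le_div
    (C := ((1 - R ^ 2)⁻¹ + 5 * M ^ 2 + 2 + 2 * M) * Real.exp (2 * M)) ?_
  filter_upwards [eventually_ge_atTop ⌈2 * M⌉₊, eventually_gt_atTop 0] with n hMn hn p hp
  have hcoeff := abs_pi_mul_inv_two_pi_mul_setIntegral_sub_le
    (w := fun r => expNegE (ENNReal.ofReal (2 * ((n : ℝ) + χ)) * V r))
    (measurable_expNegE.comp (measurable_const.mul hVmeas)) (fun _ => expNegE_nonneg _)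
    (fun _ => expNegE_le_one _) hR0.le hR1 (fun r hr => by simp [hV0 r hr, expNegE_zero])
  have hconj : starRingEnd ℂ (1 - p.2 / n) = 1 - starRingEnd ℂ p.2 / n := by simp
  have key := norm_kernelSum_sub_integral_le hcoeff hn (Nat.ceil_le.1 hMn)
    ((norm_fst_le p).trans (hM p hp))
    ((RCLike.norm_conj p.2).trans_le ((norm_snd_le p).trans (hM p hp)))
  refine Eq.trans_le ?_ key
  congr 2
  rw [hconj, Finset.mul_sum, Finset.mul_sum]
  refine Finset.sum_congr rfl fun k _ => ?_
  push_cast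
  rw [mul_pow]
  field_simp

theorem generalLimitKernel
    (χ : ℝ) (hχ : 0 ≤ χ) (R : ℝ) (hR0 : 0 < R) (hR1 : R < 1)
    (V : ℝ → ENNReal) (hVmeas : Measurable V)
    (hV0 : ∀ r ∈ Set.Icc R 1, V r = 0) :
    ∀ S : Set (ℂ × ℂ), IsCompact S →
      TendstoUniformlyOn
        (fun (n : ℕ) (p : ℂ × ℂ) =>
          ((Real.pi : ℂ) / (n : ℂ) ^ 2) * ∑ k ∈ Finset.range n,
            (((2 * Real.pi * ∫ r in Set.Icc (0 : ℝ) 1,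
                r ^ (2 * k + 1) *
                  expNegE (ENNReal.ofReal (2 * ((n : ℝ) + χ)) * V r))⁻¹ : ℝ) : ℂ) *
              (1 - p.1 / (n : ℂ)) ^ k * (starRingEnd ℂ (1 - p.2 / (n : ℂ))) ^ k)
        (fun p : ℂ × ℂ =>
          ∫ t in (0 : ℝ)..1, (t : ℂ) * Complex.exp (-(p.1 + starRingEnd ℂ p.2) * t))
        atTop S :=
  generalLimitKernel_general χ R hR0 hR1 V hVmeas hV0
end

section
/- Let χ ≥ 0, let 0 ≤ q < Q be real numbers, let 0 < R₋ < 1 < R₊ < ∞, and let V : (0,∞) → ℝ be continuous with: V(r) = q log r for r ∈ [R₋, 1]; V(r) = Q log r for r ∈ [1, R₊]; V(r) ≥ q log r for r ∈ (0, R₋]; V(r) ≥ Q log r for r ≥ R₊; and there exists C ∈ ℝ such that V(r) ≥ log r − C for all r ≥ R₊. Then for every t ∈ (q, Q) with 0 < t < 1, lim_{n→∞} n ∫_ℂ |z|^{2⌊tn⌋} e^{−2(n+χ) V(|z|)} dℓ_ℂ(z) = π (Q − q) / ( (t − q)(Q − t) ). -/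
/-!
In polar coordinates the integral is `2π ∫₀^∞ r^(m+1) e^(-c V(r)) dr` with `m = 2⌊tn⌋` and
`c = 2(n+χ)`. The conditions on `V` bound the integrand by `r^(a-1)` on `(0,1]` and by `r^(-b-1)`
on `(1,∞)`, with equality on `[R₋,1]` and `[1,R₊]`, where `a = m + 2 - cq ~ 2(t-q)n` and
`b = cQ - m - 2 ~ 2(Q-t)n`. So the integral lies between `2π(1/a + 1/b)` and the same quantity
minus the exponentially small `2π(R₋^a/a + R₊^(-b)/b)`, and `n(1/a + 1/b)` tends to
`1/(2(t-q)) + 1/(2(Q-t))`.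
-/

open Filter Topology MeasureTheory Set Real

theorem integral_comp_norm_complex (g : ℝ → ℝ) :
    ∫ z : ℂ, g ‖z‖ = 2 * π * ∫ r in Ioi 0, r * g r := by
  rw [integral_fun_norm_addHaar volume g, Measure.real, Complex.volume_ball,
    ENNReal.toReal_mul]
  norm_num
  ring

section PowerProfile

variable {g : ℝ → ℝ} {a b ρ R : ℝ}

theorem integrableOn_of_nonneg_of_le {f : ℝ → ℝ} {s : Set ℝ} (hs : MeasurableSet s)
    (hg : ContinuousOn g s) (hg0 : ∀ r ∈ s, 0 ≤ g r) (hf : IntegrableOn f s)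
    (hle : ∀ r ∈ s, g r ≤ f r) : IntegrableOn g s :=
  hf.mono' (hg.aestronglyMeasurable hs) <| ae_restrict_of_forall_mem hs fun r hr => by
    rw [norm_of_nonneg (hg0 r hr)]; exact hle r hr

theorem integrableOn_Ioc_zero_one_of_le_rpow (hg : ContinuousOn g (Ioc 0 1))
    (hg0 : ∀ r ∈ Ioc (0 : ℝ) 1, 0 ≤ g r) (ha : 0 < a)
    (hle : ∀ r ∈ Ioc (0 : ℝ) 1, g r ≤ r ^ (a - 1)) : IntegrableOn g (Ioc 0 1) :=
  integrableOn_of_nonneg_of_le measurableSet_Ioc hg hg0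
    (intervalIntegral.intervalIntegrable_rpow' (by linarith)).1 hle

theorem integrableOn_Ioi_one_of_le_rpow (hg : ContinuousOn g (Ioi 1))
    (hg0 : ∀ r ∈ Ioi (1 : ℝ), 0 ≤ g r) (hb : 0 < b)
    (hle : ∀ r ∈ Ioi (1 : ℝ), g r ≤ r ^ (-b - 1)) : IntegrableOn g (Ioi 1) :=
  integrableOn_of_nonneg_of_le measurableSet_Ioi hg hg0
    (integrableOn_Ioi_rpow_of_lt (by linarith) one_pos) hle

theorem setIntegral_Ioc_zero_one_mem_Icc (hg : ContinuousOn g (Ioc 0 1))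
    (hg0 : ∀ r ∈ Ioc (0 : ℝ) 1, 0 ≤ g r) (ha : 0 < a)
    (hle : ∀ r ∈ Ioc (0 : ℝ) 1, g r ≤ r ^ (a - 1)) (hρ0 : 0 ≤ ρ) (hρ1 : ρ ≤ 1)
    (heq : ∀ r ∈ Icc ρ 1, g r = r ^ (a - 1)) :
    ∫ r in Ioc 0 1, g r ∈ Icc ((1 - ρ ^ a) / a) (1 / a) := by
  have hint_pow : ∀ c ≤ 1, ∫ r in Ioc c 1, r ^ (a - 1) = (1 - c ^ a) / a := fun c hc => by
    rw [← intervalIntegral.integral_of_le hc, integral_rpow (by left; linarith),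
      sub_add_cancel, one_rpow]
  have hgi := integrableOn_Ioc_zero_one_of_le_rpow hg hg0 ha hle
  constructor
  · calc (1 - ρ ^ a) / a = ∫ r in Ioc ρ 1, g r := by
          rw [← hint_pow ρ hρ1]
          exact (setIntegral_congr_fun measurableSet_Ioc
            fun r hr => heq r (Ioc_subset_Icc_self hr)).symm
      _ ≤ ∫ r in Ioc 0 1, g r :=
          setIntegral_mono_set hgi (ae_restrict_of_forall_mem measurableSet_Ioc hg0)
            (Ioc_subset_Ioc_left hρ0).eventuallyLE
  · calc ∫ r in Ioc 0 1, g r ≤ ∫ r in Ioc 0 1, r ^ (a - 1) :=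
          setIntegral_mono_on hgi (intervalIntegral.intervalIntegrable_rpow' (by linarith)).1
            measurableSet_Ioc hle
      _ = 1 / a := by rw [hint_pow 0 zero_le_one, zero_rpow ha.ne']; ring

theorem setIntegral_Ioi_one_mem_Icc (hg : ContinuousOn g (Ioi 1))
    (hg0 : ∀ r ∈ Ioi (1 : ℝ), 0 ≤ g r) (hb : 0 < b)
    (hle : ∀ r ∈ Ioi (1 : ℝ), g r ≤ r ^ (-b - 1)) (hR : 1 ≤ R)
    (heq : ∀ r ∈ Icc 1 R, g r = r ^ (-b - 1)) :
    ∫ r in Ioi 1, g r ∈ Icc ((1 - R ^ (-b)) / b) (1 / b) := by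
  have hgi := integrableOn_Ioi_one_of_le_rpow hg hg0 hb hle
  constructor
  · calc (1 - R ^ (-b)) / b = ∫ r in Ioc 1 R, g r := by
          rw [setIntegral_congr_fun measurableSet_Ioc fun r hr => heq r (Ioc_subset_Icc_self hr),
            ← intervalIntegral.integral_of_le hR,
            integral_rpow (by right; exact ⟨by linarith, by simp [uIcc_of_le hR]⟩),
            sub_add_cancel, one_rpow]
          ring
      _ ≤ ∫ r in Ioi 1, g r :=
          setIntegral_mono_set hgi (ae_restrict_of_forall_mem measurableSet_Ioi hg0)
            Ioc_subset_Ioi_self.eventuallyLE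
  · calc ∫ r in Ioi 1, g r ≤ ∫ r in Ioi 1, r ^ (-b - 1) :=
          setIntegral_mono_on hgi (integrableOn_Ioi_rpow_of_lt (by linarith) one_pos)
            measurableSet_Ioi hle
      _ = 1 / b := by
          rw [integral_Ioi_rpow_of_lt (by linarith) one_pos, sub_add_cancel, one_rpow,
            neg_div_neg_eq]

theorem setIntegral_Ioi_zero_mem_Icc (hg : ContinuousOn g (Ioi 0))
    (hg0 : ∀ r ∈ Ioi (0 : ℝ), 0 ≤ g r) (ha : 0 < a) (hb : 0 < b)
    (hle_in : ∀ r ∈ Ioc (0 : ℝ) 1, g r ≤ r ^ (a - 1))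
    (hle_out : ∀ r ∈ Ioi (1 : ℝ), g r ≤ r ^ (-b - 1))
    (hρ0 : 0 ≤ ρ) (hρ1 : ρ ≤ 1) (hR : 1 ≤ R)
    (heq_in : ∀ r ∈ Icc ρ 1, g r = r ^ (a - 1)) (heq_out : ∀ r ∈ Icc 1 R, g r = r ^ (-b - 1)) :
    ∫ r in Ioi 0, g r ∈ Icc ((1 - ρ ^ a) / a + (1 - R ^ (-b)) / b) (1 / a + 1 / b) := by
  have hIoc : Ioc (0 : ℝ) 1 ⊆ Ioi 0 := Ioc_subset_Ioi_self
  have hIoi : Ioi (1 : ℝ) ⊆ Ioi 0 := Ioi_subset_Ioi zero_le_one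
  have hg_in := hg.mono hIoc
  have hg_out := hg.mono hIoi
  have hg0_in : ∀ r ∈ Ioc (0 : ℝ) 1, 0 ≤ g r := fun r hr => hg0 r (hIoc hr)
  have hg0_out : ∀ r ∈ Ioi (1 : ℝ), 0 ≤ g r := fun r hr => hg0 r (hIoi hr)
  rw [← Ioc_union_Ioi_eq_Ioi zero_le_one, setIntegral_union Ioc_disjoint_Ioi_same
    measurableSet_Ioi (integrableOn_Ioc_zero_one_of_le_rpow hg_in hg0_in ha hle_in)
    (integrableOn_Ioi_one_of_le_rpow hg_out hg0_out hb hle_out)]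
  have h_in := setIntegral_Ioc_zero_one_mem_Icc hg_in hg0_in ha hle_in hρ0 hρ1 heq_in
  have h_out := setIntegral_Ioi_one_mem_Icc hg_out hg0_out hb hle_out hR heq_out
  exact ⟨add_le_add h_in.1 h_out.1, add_le_add h_in.2 h_out.2⟩

end PowerProfile

theorem mul_pow_mul_exp_neg_mul_log {r : ℝ} (hr : 0 < r) (m : ℕ) (s : ℝ) :
    r * (r ^ m * exp (-(s * log r))) = r ^ ((m : ℝ) + 1 - s) := by
  rw [rpow_sub hr, rpow_add hr, rpow_natCast, rpow_one, rpow_def_of_pos hr, exp_neg]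
  field_simp

theorem integral_norm_pow_mul_exp_mem_Icc {V : ℝ → ℝ} {q Q ρ R c a b : ℝ} (m : ℕ)
    (hV : ContinuousOn V (Ioi 0))
    (hVin : ∀ r ∈ Ioc (0 : ℝ) 1, q * log r ≤ V r) (hVout : ∀ r ∈ Ioi (1 : ℝ), Q * log r ≤ V r)
    (hVρ : ∀ r ∈ Icc ρ 1, V r = q * log r) (hVR : ∀ r ∈ Icc 1 R, V r = Q * log r)
    (hρ0 : 0 < ρ) (hρ1 : ρ ≤ 1) (hR : 1 ≤ R) (hc : 0 ≤ c) (ha : 0 < a) (hb : 0 < b)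
    (hqa : c * q = m + 2 - a) (hQb : c * Q = m + 2 + b) :
    ∫ z : ℂ, ‖z‖ ^ m * exp (-(c * V ‖z‖)) ∈
      Icc (2 * π * ((1 - ρ ^ a) / a + (1 - R ^ (-b)) / b)) (2 * π * (1 / a + 1 / b)) := by
  have hpow : ∀ {u e r : ℝ}, c * u = m + 1 - e → 0 < r →
      r * (r ^ m * exp (-(c * (u * log r)))) = r ^ e := fun h hr => by
    rw [← mul_assoc c, h, mul_pow_mul_exp_neg_mul_log hr]; ring_nf
  have hle : ∀ {u e r : ℝ}, c * u = m + 1 - e → 0 < r → u * log r ≤ V r →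
      r * (r ^ m * exp (-(c * V r))) ≤ r ^ e :=
    fun h hr hVr => by rw [← hpow h hr]; gcongr
  have heq : ∀ {u e r : ℝ}, c * u = m + 1 - e → 0 < r → V r = u * log r →
      r * (r ^ m * exp (-(c * V r))) = r ^ e :=
    fun h hr hVr => by rw [hVr, hpow h hr]
  have hq : c * q = m + 1 - (a - 1) := by linarith
  have hQ : c * Q = m + 1 - (-b - 1) := by linarith
  have hg : ContinuousOn (fun r => r * (r ^ m * exp (-(c * V r)))) (Ioi 0) := by fun_prop
  obtain ⟨hlo, hhi⟩ := setIntegral_Ioi_zero_mem_Icc hg (fun r (hr : 0 < r) => by positivity)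
    ha hb (fun r hr => hle hq hr.1 (hVin r hr))
    (fun r hr => hle hQ (zero_lt_one.trans hr) (hVout r hr)) hρ0.le hρ1 hR
    (fun r hr => heq hq (hρ0.trans_le hr.1) (hVρ r hr))
    (fun r hr => heq hQ (zero_lt_one.trans_le hr.1) (hVR r hr))
  rw [integral_comp_norm_complex fun r => r ^ m * exp (-(c * V r))]
  exact ⟨by gcongr, by gcongr⟩

theorem tendsto_nat_floor_mul_sub_add_div {t : ℝ} (ht : 0 ≤ t) (u β : ℝ) :
    Tendsto (fun n : ℕ => (⌊t * n⌋₊ - u * n + β) / n) atTop (𝓝 (t - u)) := by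
  have h := ((tendsto_nat_floor_mul_div_atTop ht).comp tendsto_natCast_atTop_atTop).sub
    ((tendsto_const_nhds (x := u)).sub (tendsto_const_div_atTop_nhds_zero_nat β))
  rw [sub_zero] at h
  refine h.congr' ?_
  filter_upwards [eventually_ne_atTop 0] with n hn
  simp only [Function.comp_apply]
  field_simp
  ring

theorem tendsto_rpow_neg_atTop_of_one_lt {R : ℝ} (hR : 1 < R) :
    Tendsto (fun x : ℝ => R ^ (-x)) atTop (𝓝 0) := by
  have hR0 : 0 < R := zero_lt_one.trans hR
  refine (tendsto_rpow_atTop_of_base_lt_one R⁻¹ ((neg_lt_zero.2 one_pos).trans (inv_pos.2 hR0))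
    (inv_lt_one_of_one_lt₀ hR)).congr fun x => ?_
  rw [inv_rpow hR0.le, rpow_neg hR0.le]

section ExponentAsymptotics

variable {e : ℕ → ℝ} {L : ℝ}

theorem tendsto_natCast_div_of_tendsto_div (hL : L ≠ 0)
    (he : Tendsto (fun n => e n / n) atTop (𝓝 L)) :
    Tendsto (fun n => n / e n) atTop (𝓝 L⁻¹) := by
  simpa only [inv_div] using he.inv₀ hL

theorem tendsto_atTop_of_tendsto_div_natCast (hL : 0 < L)
    (he : Tendsto (fun n => e n / n) atTop (𝓝 L)) : Tendsto e atTop atTop := by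
  refine (he.pos_mul_atTop hL tendsto_natCast_atTop_atTop).congr' ?_
  filter_upwards [eventually_ne_atTop 0] with n hn
  exact div_mul_cancel₀ _ (Nat.cast_ne_zero.2 hn)

theorem tendsto_natCast_div_mul_one_sub (hL : 0 < L)
    (he : Tendsto (fun n => e n / n) atTop (𝓝 L)) {f : ℝ → ℝ} (hf : Tendsto f atTop (𝓝 0)) :
    Tendsto (fun n => n / e n * (1 - f (e n))) atTop (𝓝 L⁻¹) := by
  simpa only [Function.comp_apply, sub_zero, mul_one] using
    (tendsto_natCast_div_of_tendsto_div hL.ne' he).mul ((tendsto_const_nhds (x := (1 : ℝ))).sub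
      (hf.comp (tendsto_atTop_of_tendsto_div_natCast hL he)))

end ExponentAsymptotics

theorem coefficientLimit_general
    (χ q Q Rm Rp : ℝ) (hχ : 0 ≤ χ)
    (hRm0 : 0 < Rm) (hRm1 : Rm < 1) (hRp : 1 < Rp)
    (V : ℝ → ℝ) (hVcont : ContinuousOn V (Set.Ioi 0))
    (hV1 : ∀ r ∈ Set.Icc Rm 1, V r = q * Real.log r)
    (hV2 : ∀ r ∈ Set.Icc 1 Rp, V r = Q * Real.log r)
    (hV3 : ∀ r ∈ Set.Ioc 0 Rm, q * Real.log r ≤ V r)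
    (hV4 : ∀ r : ℝ, Rp ≤ r → Q * Real.log r ≤ V r)
    (t : ℝ) (hqt : q < t) (htQ : t < Q) (ht0 : 0 < t) :
    Tendsto (fun n : ℕ => (n : ℝ) *
        ∫ z : ℂ, ‖z‖ ^ (2 * ⌊t * (n : ℝ)⌋₊) *
          Real.exp (-2 * ((n : ℝ) + χ) * V (‖z‖)))
      atTop (𝓝 (Real.pi * (Q - q) / ((t - q) * (Q - t)))) := by
  have hVin : ∀ r ∈ Ioc (0 : ℝ) 1, q * log r ≤ V r := fun r hr =>
    (le_total r Rm).elim (fun h => hV3 r ⟨hr.1, h⟩) fun h => (hV1 r ⟨h, hr.2⟩).ge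
  have hVout : ∀ r ∈ Ioi (1 : ℝ), Q * log r ≤ V r := fun r hr =>
    (le_total r Rp).elim (fun h => (hV2 r ⟨le_of_lt hr, h⟩).ge) (hV4 r)
  set a : ℕ → ℝ := fun n => (2 * ⌊t * n⌋₊ : ℕ) + 2 - 2 * (n + χ) * q
  set b : ℕ → ℝ := fun n => 2 * (n + χ) * Q - ((2 * ⌊t * n⌋₊ : ℕ) + 2)
  have ha : Tendsto (fun n => a n / n) atTop (𝓝 (2 * (t - q))) :=
    ((tendsto_nat_floor_mul_sub_add_div ht0.le q (1 - χ * q)).const_mul 2).congr fun n => by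
      simp only [a]; push_cast; ring
  have hb : Tendsto (fun n => b n / n) atTop (𝓝 (2 * (Q - t))) := by
    have h := (tendsto_nat_floor_mul_sub_add_div ht0.le Q (1 - χ * Q)).const_mul (-2)
    rw [show -2 * (t - Q) = 2 * (Q - t) by ring] at h
    exact h.congr fun n => by simp only [b]; push_cast; ring
  have hbounds : ∀ᶠ n : ℕ in atTop, (n : ℝ) * ∫ z : ℂ, ‖z‖ ^ (2 * ⌊t * (n : ℝ)⌋₊) *
      exp (-2 * ((n : ℝ) + χ) * V ‖z‖) ∈ Icc (2 * π * (n / a n * (1 - Rm ^ a n) +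
        n / b n * (1 - Rp ^ (-b n)))) (2 * π * (n / a n + n / b n)) := by
    filter_upwards [(tendsto_atTop_of_tendsto_div_natCast (by linarith) ha).eventually_gt_atTop 0,
      (tendsto_atTop_of_tendsto_div_natCast (by linarith) hb).eventually_gt_atTop 0]
      with n han hbn
    obtain ⟨hlo, hhi⟩ := integral_norm_pow_mul_exp_mem_Icc (2 * ⌊t * n⌋₊) hVcont hVin hVout
      hV1 hV2 hRm0 hRm1.le hRp.le (by positivity : 0 ≤ 2 * ((n : ℝ) + χ)) han hbn
      (by simp only [a]; ring) (by simp only [b]; ring)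
    simp only [neg_mul]
    exact ⟨le_of_eq_of_le (by ring) (mul_le_mul_of_nonneg_left hlo n.cast_nonneg),
      le_of_le_of_eq (mul_le_mul_of_nonneg_left hhi n.cast_nonneg) (by ring)⟩
  have hlo := ((tendsto_natCast_div_mul_one_sub (by linarith) ha
    (tendsto_rpow_atTop_of_base_lt_one Rm (by linarith) hRm1)).add
    (tendsto_natCast_div_mul_one_sub (by linarith) hb
      (tendsto_rpow_neg_atTop_of_one_lt hRp))).const_mul (2 * π)
  have hhi := ((tendsto_natCast_div_of_tendsto_div (by linarith) ha).add
    (tendsto_natCast_div_of_tendsto_div (by linarith) hb)).const_mul (2 * π)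
  rw [show π * (Q - q) / ((t - q) * (Q - t)) = 2 * π * ((2 * (t - q))⁻¹ + (2 * (Q - t))⁻¹) by
    field_simp [(by linarith : t - q ≠ 0), (by linarith : Q - t ≠ 0)]; ring]
  exact tendsto_of_tendsto_of_tendsto_of_le_of_le' hlo hhi (hbounds.mono fun _ h => h.1)
    (hbounds.mono fun _ h => h.2)

theorem coefficientLimit
    (χ q Q Rm Rp : ℝ) (hχ : 0 ≤ χ) (hq : 0 ≤ q) (hqQ : q < Q)
    (hRm0 : 0 < Rm) (hRm1 : Rm < 1) (hRp : 1 < Rp)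
    (V : ℝ → ℝ) (hVcont : ContinuousOn V (Set.Ioi 0))
    (hV1 : ∀ r ∈ Set.Icc Rm 1, V r = q * Real.log r)
    (hV2 : ∀ r ∈ Set.Icc 1 Rp, V r = Q * Real.log r)
    (hV3 : ∀ r ∈ Set.Ioc 0 Rm, q * Real.log r ≤ V r)
    (hV4 : ∀ r : ℝ, Rp ≤ r → Q * Real.log r ≤ V r)
    (hV5 : ∃ C : ℝ, ∀ r : ℝ, Rp ≤ r → Real.log r - C ≤ V r)
    (t : ℝ) (hqt : q < t) (htQ : t < Q) (ht0 : 0 < t) (ht1 : t < 1) :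
    Tendsto (fun n : ℕ => (n : ℝ) *
        ∫ z : ℂ, ‖z‖ ^ (2 * ⌊t * (n : ℝ)⌋₊) *
          Real.exp (-2 * ((n : ℝ) + χ) * V (‖z‖)))
      atTop (𝓝 (Real.pi * (Q - q) / ((t - q) * (Q - t)))) :=
  coefficientLimit_general χ q Q Rm Rp hχ hRm0 hRm1 hRp V hVcont hV1 hV2 hV3 hV4 t hqt htQ ht0
end

section
/- For each integer n ≥ 1 define Kₙ : ℂ × ℂ → ℂ by Kₙ(z, w) = (1/n) ∑_{k=0}^{n} (1 + z/n)^k (1 + conj(w)/n)^k. Then Kₙ converges, as n → ∞, uniformly on every compact subset of ℂ × ℂ to the function K(z, w) = ∫_0^1 e^{(z + conj w) t} dt; this limit equals (e^{z + conj w} − 1)/(z + conj w) whenever z + conj w ≠ 0. -/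
/-!
Put `s = z + conj w` and `x = (1 + z/n)(1 + conj w/n)`. Since `x = e^{s/n} + O(n⁻²)` and
`|x|, |e^{s/n}| ≤ e^{2R/n}` when `|z|, |w| ≤ R`, the powers `x^k` and `e^{sk/n}` differ by `O(1/n)`
for `k ≤ n`. Hence the kernel is, up to `O(1/n)`, the left Riemann sum `(1/n) ∑_{k<n} e^{sk/n}` of
`∫₀¹ e^{st} dt`, and that sum is within `O(1/n)` of the integral because `t ↦ e^{st}` is Lipschitz on
`[0, 1]`. All constants depend on `R` only, which gives uniform convergence on compact sets.
-/

open Filter Topology Finset Set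

theorem norm_integral_sub_riemannSum_le {E : Type*} [NormedAddCommGroup E] [NormedSpace ℝ E]
    [CompleteSpace E] {f : ℝ → E} {L : NNReal} {a b : ℝ} (hab : a ≤ b)
    (hf : LipschitzOnWith L f (Icc a b)) {n : ℕ} (hn : 0 < n) :
    ‖(∫ t in a..b, f t) - ((b - a) / n) • ∑ k ∈ range n, f (a + k * ((b - a) / n))‖
      ≤ L * (b - a) ^ 2 / n := by
  set h := (b - a) / n with h_def
  have hh : 0 ≤ h := div_nonneg (sub_nonneg.2 hab) n.cast_nonneg
  set t : ℕ → ℝ := fun k => a + k * h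
  have ht_mono : Monotone t := fun i j hij => by simp only [t]; gcongr
  have ht_zero : t 0 = a := by simp [t]
  have ht_last : t n = b := by simp only [t, h_def]; field_simp; ring
  have ht_mem : ∀ k ≤ n, t k ∈ Icc a b := fun k hk =>
    ⟨ht_zero ▸ ht_mono k.zero_le, ht_last ▸ ht_mono hk⟩
  have hsub : ∀ k < n, Icc (t k) (t (k + 1)) ⊆ Icc a b := fun k hk =>
    Icc_subset_Icc (ht_mem k hk.le).1 (ht_mem (k + 1) hk).2
  have hint : ∀ k < n, IntervalIntegrable f MeasureTheory.volume (t k) (t (k + 1)) := fun k hk =>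
    (hf.continuousOn.mono <|
      (uIcc_of_le (ht_mono k.le_succ)).trans_subset (hsub k hk)).intervalIntegrable
  have hpiece : ∀ k < n,
      ‖(∫ s in t k..t (k + 1), f s) - h • f (t k)‖ ≤ L * h * h := fun k hk => by
    have hlen : t (k + 1) - t k = h := by simp only [t]; push_cast; ring
    rw [← hlen, ← intervalIntegral.integral_const,
      ← intervalIntegral.integral_sub (hint k hk) intervalIntegrable_const, hlen]
    refine (intervalIntegral.norm_integral_le_of_norm_le_const fun s hs => ?_).trans_eq
      (by rw [hlen, abs_of_nonneg hh])
    rw [uIoc_of_le (ht_mono k.le_succ)] at hs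
    calc ‖f s - f (t k)‖ ≤ L * dist s (t k) :=
          hf.norm_sub_le (hsub k hk (Ioc_subset_Icc_self hs)) (ht_mem k hk.le)
      _ ≤ L * h := by
          rw [Real.dist_eq, abs_of_nonneg (by linarith [hs.1]), ← hlen]
          gcongr
          exact hs.2
  calc ‖(∫ s in a..b, f s) - h • ∑ k ∈ range n, f (t k)‖
      = ‖∑ k ∈ range n, ((∫ s in t k..t (k + 1), f s) - h • f (t k))‖ := by
        rw [sum_sub_distrib, intervalIntegral.sum_integral_adjacent_intervals hint, smul_sum,
          ht_zero, ht_last]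
    _ ≤ ∑ k ∈ range n, L * h * h := norm_sum_le_of_le _ fun k hk => hpiece k (mem_range.1 hk)
    _ = L * (b - a) ^ 2 / n := by
        rw [sum_const, card_range, nsmul_eq_mul, h_def]; field_simp

theorem Complex.lipschitzOnWith_exp_mul_Icc (s : ℂ) :
    LipschitzOnWith (‖s‖₊ * (Real.exp ‖s‖).toNNReal) (fun t : ℝ => Complex.exp (s * t))
      (Icc 0 1) := by
  refine (convex_Icc 0 1).lipschitzOnWith_of_nnnorm_hasDerivWithin_le
    (fun t _ => ((hasDerivAt_id (t : ℝ)).ofReal_comp.const_mul s |>.cexp).hasDerivWithinAt)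
    fun t ht => ?_
  rw [← NNReal.coe_le_coe]
  push_cast
  rw [Real.coe_toNNReal _ (Real.exp_pos _).le]
  calc ‖Complex.exp (s * t) * (s * 1)‖ ≤ Real.exp ‖s * t‖ * ‖s‖ := by
        rw [norm_mul, mul_one]; gcongr; exact Complex.norm_exp_le_exp_norm _
    _ ≤ ‖s‖ * Real.exp ‖s‖ := by
        rw [mul_comm, norm_mul, Complex.norm_real, Real.norm_eq_abs, abs_of_nonneg ht.1]
        gcongr
        exact mul_le_of_le_one_right (norm_nonneg s) ht.2

theorem Complex.norm_integral_exp_mul_sub_geom_sum_le (s : ℂ) {n : ℕ} (hn : 0 < n) :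
    ‖(∫ t in (0 : ℝ)..1, Complex.exp (s * t))
        - (1 / n : ℂ) * ∑ k ∈ range n, Complex.exp (s / n) ^ k‖
      ≤ ‖s‖ * Real.exp ‖s‖ / n := by
  have hsum :
      ((1 - 0) / n : ℝ) • ∑ k ∈ range n, Complex.exp (s * (0 + k * ((1 - 0) / n) : ℝ))
      = (1 / n : ℂ) * ∑ k ∈ range n, Complex.exp (s / n) ^ k := by
    rw [Complex.real_smul, mul_sum, mul_sum]
    refine Finset.sum_congr rfl fun k _ => ?_
    rw [← Complex.exp_nat_mul]
    push_cast
    ring_nf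
  have h := norm_integral_sub_riemannSum_le zero_le_one (lipschitzOnWith_exp_mul_Icc s) hn
  rw [hsum] at h
  convert h using 1
  push_cast
  rw [Real.coe_toNNReal _ (Real.exp_pos _).le]
  ring

theorem norm_pow_sub_pow_le_s16 {R : Type*} [NormedRing R] [NormOneClass R] {x y : R} {M : ℝ}
    (hx : ‖x‖ ≤ M) (hy : ‖y‖ ≤ M) (k : ℕ) :
    ‖x ^ (k + 1) - y ^ (k + 1)‖ ≤ (k + 1) * M ^ k * ‖x - y‖ := by
  have hM : 0 ≤ M := (norm_nonneg x).trans hx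
  induction k with
  | zero => simp
  | succ k ih =>
    have key : x ^ (k + 2) - y ^ (k + 2)
        = x ^ (k + 1) * (x - y) + (x ^ (k + 1) - y ^ (k + 1)) * y := by
      noncomm_ring
    calc ‖x ^ (k + 2) - y ^ (k + 2)‖
        ≤ ‖x‖ ^ (k + 1) * ‖x - y‖ + ‖x ^ (k + 1) - y ^ (k + 1)‖ * ‖y‖ := by
          rw [key]
          refine (norm_add_le _ _).trans
            (add_le_add ((norm_mul_le _ _).trans ?_) (norm_mul_le _ _))
          gcongr
          exact norm_pow_le _ _
      _ ≤ M ^ (k + 1) * ‖x - y‖ + (k + 1) * M ^ k * ‖x - y‖ * M := by gcongr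
      _ = (↑(k + 1) + 1) * M ^ (k + 1) * ‖x - y‖ := by push_cast; ring

theorem Complex.norm_one_add_mul_one_add_sub_exp_le (u v : ℂ) :
    ‖(1 + u) * (1 + v) - Complex.exp (u + v)‖
      ≤ ‖u + v‖ ^ 2 * Real.exp ‖u + v‖ + ‖u‖ * ‖v‖ := by
  have key : (1 + u) * (1 + v) - Complex.exp (u + v)
      = u * v - (Complex.exp (u + v) - ∑ m ∈ range 2, (u + v) ^ m / m.factorial) := by
    simp [sum_range_succ]; ring
  rw [key]
  linarith [norm_sub_le (u * v) (Complex.exp (u + v) - ∑ m ∈ range 2, (u + v) ^ m / m.factorial),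
    norm_mul_le u v, Complex.norm_exp_sub_sum_le_norm_mul_exp (u + v) 2]

theorem Complex.norm_one_add_le_exp_norm (u : ℂ) : ‖1 + u‖ ≤ Real.exp ‖u‖ :=
  (norm_add_le _ _).trans (by rw [norm_one, add_comm]; exact Real.add_one_le_exp _)

theorem norm_one_add_div_mul_pow_sub_exp_le {R : ℝ} {n : ℕ} (hn : 0 < n) {z w : ℂ}
    (hz : ‖z‖ ≤ R) (hw : ‖w‖ ≤ R) {k : ℕ} (hk : k ≤ n) :
    ‖((1 + z / n) * (1 + w / n)) ^ k - Complex.exp ((z + w) / n) ^ k‖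
      ≤ 5 * R ^ 2 * Real.exp (2 * R) / n := by
  have hR : 0 ≤ R := (norm_nonneg z).trans hz
  have hn' : (0 : ℝ) < n := Nat.cast_pos.2 hn
  set r := R / n
  set M := Real.exp (2 * r)
  have hM : 1 ≤ M := Real.one_le_exp (by positivity)
  have hu : ‖z / n‖ ≤ r := by
    rw [norm_div, Complex.norm_natCast]; exact div_le_div_of_nonneg_right hz hn'.le
  have hv : ‖w / n‖ ≤ r := by
    rw [norm_div, Complex.norm_natCast]; exact div_le_div_of_nonneg_right hw hn'.le
  have huv : ‖z / n + w / n‖ ≤ 2 * r := (norm_add_le _ _).trans (by linarith)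
  have hx : ‖(1 + z / n) * (1 + w / n)‖ ≤ M := by
    rw [norm_mul, show M = Real.exp r * Real.exp r by rw [← Real.exp_add, ← two_mul]]
    gcongr <;> exact (Complex.norm_one_add_le_exp_norm _).trans (Real.exp_le_exp.2 ‹_›)
  have hy : ‖Complex.exp ((z + w) / n)‖ ≤ M := by
    rw [add_div]
    exact (Complex.norm_exp_le_exp_norm _).trans (Real.exp_le_exp.2 huv)
  have hxy : ‖(1 + z / n) * (1 + w / n) - Complex.exp ((z + w) / n)‖ ≤ 5 * r ^ 2 * M := by
    rw [add_div]
    calc _ ≤ ‖z / n + w / n‖ ^ 2 * Real.exp ‖z / n + w / n‖ + ‖z / n‖ * ‖w / n‖ :=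
          Complex.norm_one_add_mul_one_add_sub_exp_le _ _
      _ ≤ (2 * r) ^ 2 * M + r * r := by gcongr; exact Real.exp_le_exp.2 huv
      _ ≤ 5 * r ^ 2 * M := by nlinarith [sq_nonneg r]
  obtain _ | j := k
  · simp only [pow_zero, sub_self, norm_zero]; positivity
  have hMj : M ^ (j + 1) ≤ Real.exp (2 * R) := by
    calc M ^ (j + 1) ≤ M ^ n := pow_le_pow_right₀ hM hk
      _ = Real.exp (2 * R) := by
          rw [← Real.exp_nat_mul, mul_left_comm, mul_div_cancel₀ R hn'.ne']
  calc _ ≤ (j + 1) * M ^ j * (5 * r ^ 2 * M) := by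
        grw [norm_pow_sub_pow_le_s16 hx hy j, hxy]
    _ = 5 * r ^ 2 * (j + 1) * M ^ (j + 1) := by ring
    _ ≤ 5 * r ^ 2 * n * Real.exp (2 * R) := by gcongr; exact_mod_cast hk
    _ = 5 * R ^ 2 * Real.exp (2 * R) / n := by simp only [r]; field_simp

theorem norm_one_div_mul_sum_pow_sub_exp_pow_le {R : ℝ} {n : ℕ} (hn : 0 < n) {z w : ℂ}
    (hz : ‖z‖ ≤ R) (hw : ‖w‖ ≤ R) :
    ‖(1 / n : ℂ) * ∑ k ∈ range (n + 1),
        (((1 + z / n) * (1 + w / n)) ^ k - Complex.exp ((z + w) / n) ^ k)‖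
      ≤ 10 * R ^ 2 * Real.exp (2 * R) / n := by
  have hn' : (0 : ℝ) < n := Nat.cast_pos.2 hn
  have hn1 : ((n : ℝ) + 1) / n ≤ 2 := by
    rw [div_le_iff₀ hn']; linarith [(Nat.one_le_cast (α := ℝ)).2 hn]
  rw [norm_mul, norm_div, norm_one, Complex.norm_natCast]
  calc 1 / n * ‖∑ k ∈ range (n + 1),
        (((1 + z / n) * (1 + w / n)) ^ k - Complex.exp ((z + w) / n) ^ k)‖
      ≤ 1 / n * ((n + 1) * (5 * R ^ 2 * Real.exp (2 * R) / n)) := by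
        gcongr
        refine (norm_sum_le_of_le _ fun k hk => ?_).trans_eq
          (by rw [sum_const, card_range, nsmul_eq_mul]; push_cast; rfl)
        exact norm_one_add_div_mul_pow_sub_exp_le hn hz hw (Nat.lt_succ_iff.1 (mem_range.1 hk))
    _ = (n + 1) / n * (5 * R ^ 2 * Real.exp (2 * R) / n) := by ring
    _ ≤ 2 * (5 * R ^ 2 * Real.exp (2 * R) / n) := by gcongr
    _ = 10 * R ^ 2 * Real.exp (2 * R) / n := by ring

/-- `Kₙ(z, conj w) = kacKernel n z w`. -/
noncomputable def kacKernel (n : ℕ) (z w : ℂ) : ℂ :=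
  (1 / (n : ℂ)) * ∑ k ∈ range (n + 1), (1 + z / n) ^ k * (1 + w / n) ^ k

theorem norm_kacKernel_sub_integral_le {R : ℝ} {n : ℕ} (hn : 0 < n) {z w : ℂ}
    (hz : ‖z‖ ≤ R) (hw : ‖w‖ ≤ R) :
    ‖kacKernel n z w - ∫ t in (0 : ℝ)..1, Complex.exp ((z + w) * t)‖
      ≤ (10 * R ^ 2 + 2 * R + 1) * Real.exp (2 * R) / n := by
  have hR : 0 ≤ R := (norm_nonneg z).trans hz
  set s := z + w
  set x := (1 + z / n) * (1 + w / n)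
  set y := Complex.exp (s / n)
  have hs : ‖s‖ ≤ 2 * R := (norm_add_le _ _).trans (by linarith)
  have hsplit : kacKernel n z w - ∫ t in (0 : ℝ)..1, Complex.exp (s * t)
      = (1 / n : ℂ) * ∑ k ∈ range (n + 1), (x ^ k - y ^ k) + (1 / n : ℂ) * y ^ n
        - ((∫ t in (0 : ℝ)..1, Complex.exp (s * t))
          - (1 / n : ℂ) * ∑ k ∈ range n, y ^ k) := by
    simp only [kacKernel, x, mul_pow, sum_sub_distrib, sum_range_succ (fun k : ℕ => y ^ k)]
    ring
  have hyn : y ^ n = Complex.exp s := by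
    rw [← Complex.exp_nat_mul, mul_div_cancel₀ s (Nat.cast_ne_zero.2 hn.ne')]
  have hinv : ‖(1 / n : ℂ)‖ = 1 / n := by rw [norm_div, norm_one, Complex.norm_natCast]
  have hpow := norm_one_div_mul_sum_pow_sub_exp_pow_le hn hz hw
  have hlast : ‖(1 / n : ℂ) * Complex.exp s‖ ≤ Real.exp (2 * R) / n := by
    rw [norm_mul, hinv, one_div_mul_eq_div]
    gcongr
    exact (Complex.norm_exp_le_exp_norm s).trans (Real.exp_le_exp.2 hs)
  have hriemann := Complex.norm_integral_exp_mul_sub_geom_sum_le s hn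
  rw [hsplit, hyn]
  calc _ ≤ _ := norm_sub_le_of_le (norm_add_le_of_le hpow hlast) hriemann
    _ ≤ 10 * R ^ 2 * Real.exp (2 * R) / n + Real.exp (2 * R) / n
          + 2 * R * Real.exp (2 * R) / n := by gcongr
    _ = (10 * R ^ 2 + 2 * R + 1) * Real.exp (2 * R) / n := by ring

theorem kacCovarianceNearCircle :
    (∀ S : Set (ℂ × ℂ), IsCompact S →
      TendstoUniformlyOn
        (fun (n : ℕ) (p : ℂ × ℂ) =>
          (1 / (n : ℂ)) * ∑ k ∈ Finset.range (n + 1),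
            (1 + p.1 / (n : ℂ)) ^ k * (1 + starRingEnd ℂ p.2 / (n : ℂ)) ^ k)
        (fun p : ℂ × ℂ =>
          ∫ t in (0 : ℝ)..1, Complex.exp ((p.1 + starRingEnd ℂ p.2) * t))
        atTop S) ∧
    ∀ z w : ℂ, z + starRingEnd ℂ w ≠ 0 →
      (∫ t in (0 : ℝ)..1, Complex.exp ((z + starRingEnd ℂ w) * t)) =
        (Complex.exp (z + starRingEnd ℂ w) - 1) / (z + starRingEnd ℂ w) := by
  refine ⟨fun S hS => ?_, fun z w hzw => ?_⟩
  · obtain ⟨R, hR⟩ := hS.isBounded.exists_norm_le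
    set C := (10 * R ^ 2 + 2 * R + 1) * Real.exp (2 * R)
    rw [Metric.tendstoUniformlyOn_iff]
    intro ε hε
    filter_upwards [(tendsto_const_div_atTop_nhds_zero_nat C).eventually (gt_mem_nhds hε),
      eventually_gt_atTop 0] with n hCn hn p hp
    rw [dist_comm, dist_eq_norm]
    refine lt_of_le_of_lt ?_ hCn
    exact norm_kacKernel_sub_integral_le hn ((norm_fst_le p).trans (hR p hp))
      ((RCLike.norm_conj p.2).trans_le ((norm_snd_le p).trans (hR p hp)))
  · rw [integral_exp_mul_complex hzw]
    simp
end

section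
/- Let 0 ≤ q < 1 and Q > q be real numbers, and define K : ℂ × ℂ → ℂ by K(α, β) = e^{−q·Re(α)} e^{−q·Re(β)} (1/π) ∫_q^{min(Q,1)} ( (Q − t)(t − q) / (Q − q) ) e^{(α + conj β) t} dt. Let ℍ = { z ∈ ℂ : Re(z) < 0 } be the left half-plane. Then the functions (z, w) ↦ e^{−i q n Im(z)} · n² K(nz, nw) · e^{i q n Im(w)} converge, as n → ∞, uniformly on every compact subset of ℍ × ℍ to the function (z, w) ↦ 1 / ( π (z + conj w)² ). -/
/-!
With `c = n (z + conj w)`, the phases and the factors `e^{-q Re}` combine into `e^{-q c}`, which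
moves the lower endpoint of the integral to `0`. Integrating the quadratic weight against
`e^{c u}` in closed form gives exactly `1 / c²` plus a remainder. Multiplied by `n² / π`, the
first term is the Bergman kernel `1 / (π (z + conj w)²)`. On a compact subset of `ℍ × ℍ` we have
`Re (z + conj w) ≤ -δ` and `|z + conj w| ≤ M`, so the remainder is `O(1/n)` uniformly: its
boundary term at `t = min Q 1` is damped by `e^{-n δ (min Q 1 - q)}`.
-/

open Filter Topology MeasureTheory Complex ComplexConjugate

theorem tendstoUniformlyOn_of_norm_sub_le {ι α E : Type*} [SeminormedAddCommGroup E]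
    {l : Filter ι} {F : ι → α → E} {f : α → E} {s : Set α} {a : ι → ℝ}
    (ha : Tendsto a l (𝓝 0)) (hF : ∀ᶠ i in l, ∀ x ∈ s, ‖F i x - f x‖ ≤ a i) :
    TendstoUniformlyOn F f l s := by
  rw [Metric.tendstoUniformlyOn_iff]
  intro ε hε
  filter_upwards [hF, ha.eventually (gt_mem_nhds hε)] with i hi hai x hx
  rw [dist_comm, dist_eq_norm]
  exact (hi x hx).trans_lt hai

theorem tendsto_natCast_mul_exp_neg_mul_atTop {b : ℝ} (hb : 0 < b) :
    Tendsto (fun n : ℕ => (n : ℝ) * Real.exp (-(b * n))) atTop (𝓝 0) := by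
  simpa [Real.rpow_one, Function.comp_def] using
    (tendsto_rpow_mul_exp_neg_mul_atTop_nhds_zero 1 b hb).comp tendsto_natCast_atTop_atTop

section EdgeKernel

variable (q Q m : ℝ)

-- The kernel `K` of the statement, with `m` in place of `min Q 1`.
noncomputable def edgeKernel (α β : ℂ) : ℂ :=
  ((Real.exp (-(q * α.re)) : ℝ) : ℂ) * ((Real.exp (-(q * β.re)) : ℝ) : ℂ) * (1 / (Real.pi : ℂ)) *
    ∫ t in q..m, (((Q - t) * (t - q) / (Q - q) : ℝ) : ℂ) * exp ((α + conj β) * (t : ℂ))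

noncomputable def edgeRemainder (c : ℂ) : ℂ :=
  (exp (c * (m - q)) * ((Q - m) * (m - q) * c ^ 2 - (Q + q - 2 * m) * c - 2) + 2) /
    ((Q - q) * c ^ 3)

variable {q Q}

theorem exp_neg_mul_integral_edgeWeight (hQq : Q ≠ q) {c : ℂ} (hc : c ≠ 0) :
    exp (-(q * c)) * ∫ t in q..m, (((Q - t) * (t - q) / (Q - q) : ℝ) : ℂ) * exp (c * t) =
      1 / c ^ 2 + edgeRemainder q Q m c := by
  have hQq' : (Q : ℂ) - q ≠ 0 := sub_ne_zero.mpr (by exact_mod_cast hQq)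
  set R : ℂ → ℂ := fun z => (Q - z) * (z - q) * c ^ 2 - (Q + q - 2 * z) * c - 2
  set G : ℝ → ℂ := fun t => exp (c * (t - q)) * R t / ((Q - q) * c ^ 3)
  have hG : ∀ t ∈ Set.uIcc q m, HasDerivAt G
      (exp (-(q * c)) * ((((Q - t) * (t - q) / (Q - q) : ℝ) : ℂ) * exp (c * t))) t := by
    intro t _
    have hR : HasDerivAt R ((Q + q - 2 * t) * c ^ 2 + 2 * c) (t : ℂ) := by
      have := ((((hasDerivAt_id (t : ℂ)).const_sub (Q : ℂ)).mul
        ((hasDerivAt_id (t : ℂ)).sub_const (q : ℂ))).mul_const (c ^ 2)).sub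
        (((hasDerivAt_id (t : ℂ)).const_mul 2).const_sub (Q + q : ℂ) |>.mul_const c)
      exact (this.sub_const 2).congr_deriv (by simp only [id]; ring)
    have hE : HasDerivAt (fun z : ℂ => exp (c * (z - q))) (exp (c * (t - q)) * c) (t : ℂ) := by
      simpa using (((hasDerivAt_id (t : ℂ)).sub_const (q : ℂ)).const_mul c).cexp
    refine ((hE.mul hR).div_const ((Q - q) * c ^ 3)).comp_ofReal.congr_deriv ?_
    rw [show c * (t - q) = -(q * c) + c * t by ring, exp_add]
    push_cast
    field_simp
    ring
  rw [← intervalIntegral.integral_const_mul, intervalIntegral.integral_eq_sub_of_hasDerivAt hG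
    ((by fun_prop : Continuous _).intervalIntegrable _ _)]
  simp only [G, R, edgeRemainder, sub_self, mul_zero, exp_zero]
  field_simp
  ring

theorem phase_mul_edgeKernel_mul_phase (α β : ℂ) :
    exp (-I * q * α.im) * edgeKernel q Q m α β * exp (I * q * β.im) =
      1 / Real.pi * (exp (-(q * (α + conj β))) *
        ∫ t in q..m, (((Q - t) * (t - q) / (Q - q) : ℝ) : ℂ) * exp ((α + conj β) * t)) := by
  have hphase : exp (-I * q * α.im) * (Real.exp (-(q * α.re)) : ℂ) *
      (Real.exp (-(q * β.re)) : ℂ) * exp (I * q * β.im) = exp (-(q * (α + conj β))) := by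
    push_cast
    simp only [← exp_add]
    congr 1
    conv_rhs => rw [← re_add_im α, ← re_add_im β]
    simp only [map_add, map_mul, conj_ofReal, conj_I]
    ring
  unfold edgeKernel
  linear_combination (1 / Real.pi *
    ∫ t in q..m, (((Q - t) * (t - q) / (Q - q) : ℝ) : ℂ) * exp ((α + conj β) * t)) * hphase

theorem scaled_edgeKernel_eq (hQq : Q ≠ q) {n : ℕ} (hn : n ≠ 0) {z w : ℂ}
    (hs : z + conj w ≠ 0) :
    exp (-I * q * n * z.im) * (n ^ 2 * edgeKernel q Q m (n * z) (n * w)) *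
        exp (I * q * n * w.im) =
      1 / (Real.pi * (z + conj w) ^ 2) +
        n ^ 2 * edgeRemainder q Q m (n * (z + conj w)) / Real.pi := by
  have hc : (n : ℂ) * (z + conj w) ≠ 0 := mul_ne_zero (by exact_mod_cast hn) hs
  have hπ : (Real.pi : ℂ) ≠ 0 := by exact_mod_cast Real.pi_ne_zero
  have key := phase_mul_edgeKernel_mul_phase (q := q) (Q := Q) m (n * z) (n * w)
  simp only [mul_im, natCast_re, natCast_im, zero_mul, add_zero, map_mul, map_natCast,
    ← mul_add, exp_neg_mul_integral_edgeWeight m hQq hc] at key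
  push_cast at key
  rw [← mul_assoc (-I * q), ← mul_assoc (I * q)] at key
  calc _ = n ^ 2 * (exp (-I * q * n * z.im) * edgeKernel q Q m (n * z) (n * w) *
        exp (I * q * n * w.im)) := by ring
    _ = _ := by rw [key]; field_simp

theorem norm_edgeRemainder_le (c : ℂ) :
    ‖edgeRemainder q Q m c‖ ≤
      (Real.exp ((m - q) * c.re) * (|(Q - m) * (m - q)| * ‖c‖ ^ 2 + |Q + q - 2 * m| * ‖c‖ + 2)
        + 2) / (|Q - q| * ‖c‖ ^ 3) := by
  have hnum : ‖(Q - m) * (m - q) * c ^ 2 - (Q + q - 2 * m) * c - 2‖ ≤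
      |(Q - m) * (m - q)| * ‖c‖ ^ 2 + |Q + q - 2 * m| * ‖c‖ + 2 := by
    refine (norm_sub_le _ _).trans (add_le_add ((norm_sub_le _ _).trans_eq ?_) (by simp))
    simp only [norm_mul, norm_pow]
    norm_cast
    simp only [Real.norm_eq_abs, abs_mul]
  rw [edgeRemainder, norm_div, norm_mul, norm_pow]
  have hden : ‖(Q : ℂ) - q‖ = |Q - q| := by norm_cast
  rw [hden]
  gcongr
  refine (norm_add_le _ _).trans ?_
  rw [norm_mul, norm_exp, Complex.norm_two]
  gcongr
  simp [mul_comm]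

theorem norm_natCast_sq_mul_edgeRemainder_le (hQq : Q ≠ q) (hqm : q ≤ m) {δ M : ℝ}
    (hδ : 0 < δ) {s : ℂ} (hre : s.re ≤ -δ) (hM : ‖s‖ ≤ M) {n : ℕ} (hn : 1 ≤ n) :
    ‖(n : ℂ) ^ 2 * edgeRemainder q Q m (n * s)‖ ≤
      ((|(Q - m) * (m - q)| * M ^ 2 + |Q + q - 2 * m| * M + 2) * n *
        Real.exp (-(δ * (m - q) * n)) + 2 / n) / (|Q - q| * δ ^ 3) := by
  set A := |(Q - m) * (m - q)|
  set B := |Q + q - 2 * m|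
  have hA : 0 ≤ A := abs_nonneg _
  have hB : 0 ≤ B := abs_nonneg _
  have hn' : (1 : ℝ) ≤ n := by exact_mod_cast hn
  have hδs : δ ≤ ‖s‖ := by linarith [neg_abs_le s.re, abs_re_le_norm s]
  have hQq' : 0 < |Q - q| := abs_pos.mpr (sub_ne_zero.mpr hQq)
  have hM0 : 0 ≤ M := (norm_nonneg s).trans hM
  have hpoly : A * (n * M) ^ 2 + B * (n * M) + 2 ≤ (A * M ^ 2 + B * M + 2) * n ^ 2 := by
    have : B * M * n ≤ B * M * n ^ 2 := by gcongr; nlinarith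
    nlinarith
  calc ‖(n : ℂ) ^ 2 * edgeRemainder q Q m (n * s)‖
      = n ^ 2 * ‖edgeRemainder q Q m (n * s)‖ := by simp
    _ ≤ n ^ 2 * ((Real.exp ((m - q) * (n * s.re)) *
          (A * (n * ‖s‖) ^ 2 + B * (n * ‖s‖) + 2) + 2) / (|Q - q| * (n * ‖s‖) ^ 3)) := by
        have hc : ‖(n : ℂ) * s‖ = n * ‖s‖ ∧ ((n : ℂ) * s).re = n * s.re := by simp
        gcongr
        simpa only [hc] using norm_edgeRemainder_le (q := q) (Q := Q) m (n * s)
    _ ≤ n ^ 2 * ((Real.exp (-(δ * (m - q) * n)) * (A * (n * M) ^ 2 + B * (n * M) + 2) + 2)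
          / (|Q - q| * (n * δ) ^ 3)) := by
        gcongr
        nlinarith [mul_le_mul_of_nonneg_left hre (by positivity : (0 : ℝ) ≤ (m - q) * n)]
    _ ≤ n ^ 2 * ((Real.exp (-(δ * (m - q) * n)) * ((A * M ^ 2 + B * M + 2) * n ^ 2) + 2)
          / (|Q - q| * (n * δ) ^ 3)) := by gcongr
    _ = _ := by field_simp

theorem tendstoUniformlyOn_scaled_edgeKernel (hqm : q < m) (hQq : Q ≠ q) {S : Set (ℂ × ℂ)}
    (hS : IsCompact S) (hSH : S ⊆ {p | p.1.re < 0 ∧ p.2.re < 0}) :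
    TendstoUniformlyOn
      (fun (n : ℕ) (p : ℂ × ℂ) => exp (-I * q * n * p.1.im) *
        (n ^ 2 * edgeKernel q Q m (n * p.1) (n * p.2)) * exp (I * q * n * p.2.im))
      (fun p => 1 / (Real.pi * (p.1 + conj p.2) ^ 2)) atTop S := by
  have hs : Continuous fun p : ℂ × ℂ => p.1 + conj p.2 := by fun_prop
  obtain ⟨δ, hδ, hδS⟩ : ∃ δ > 0, ∀ p ∈ S, (p.1 + conj p.2).re ≤ -δ := by
    obtain ⟨δ, hδ, h⟩ := hS.exists_forall_le' (f := fun p => -(p.1 + conj p.2).re)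
      (by fun_prop) (a := 0) fun p hp => by
        obtain ⟨h1, h2⟩ := hSH hp
        simp only [add_re, conj_re]
        linarith
    exact ⟨δ, hδ, fun p hp => by linarith [h p hp]⟩
  obtain ⟨M, hM⟩ := hS.exists_bound_of_continuousOn hs.continuousOn
  set K := |(Q - m) * (m - q)| * M ^ 2 + |Q + q - 2 * m| * M + 2
  refine tendstoUniformlyOn_of_norm_sub_le
    (a := fun n : ℕ => (K * n * Real.exp (-(δ * (m - q) * n)) + 2 / n) / (|Q - q| * δ ^ 3)
      / Real.pi) ?_ ?_
  · have hexp := tendsto_natCast_mul_exp_neg_mul_atTop (mul_pos hδ (sub_pos.mpr hqm))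
    simpa [mul_assoc] using (((hexp.const_mul K).add (tendsto_const_div_atTop_nhds_zero_nat 2)
      ).div_const (|Q - q| * δ ^ 3)).div_const Real.pi
  · filter_upwards [eventually_ge_atTop 1] with n hn p hp
    have hsp : p.1 + conj p.2 ≠ 0 := fun h0 => by
      simpa [h0] using (hδS p hp).trans_lt (neg_neg_of_pos hδ)
    rw [scaled_edgeKernel_eq m hQq (by omega) hsp, add_sub_cancel_left, norm_div, norm_real,
      Real.norm_of_nonneg Real.pi_pos.le]
    gcongr
    exact norm_natCast_sq_mul_edgeRemainder_le m hQq hqm.le hδ (hδS p hp) (hM p hp) hn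

end EdgeKernel

theorem edgeToBergman_general
    (q Q : ℝ) (hq1 : q < 1) (hqQ : q < Q) :
    ∀ S : Set (ℂ × ℂ), IsCompact S →
      S ⊆ {p : ℂ × ℂ | p.1.re < 0 ∧ p.2.re < 0} →
      TendstoUniformlyOn
        (fun (n : ℕ) (p : ℂ × ℂ) =>
          Complex.exp (-Complex.I * (q : ℂ) * (n : ℂ) * (p.1.im : ℂ)) *
            ((n : ℂ) ^ 2 *
              (((Real.exp (-(q * ((n : ℂ) * p.1).re)) : ℝ) : ℂ) *
                ((Real.exp (-(q * ((n : ℂ) * p.2).re)) : ℝ) : ℂ) *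
                (1 / (Real.pi : ℂ)) *
                ∫ t in q..(min Q 1),
                  (((Q - t) * (t - q) / (Q - q) : ℝ) : ℂ) *
                    Complex.exp ((((n : ℂ) * p.1) + starRingEnd ℂ ((n : ℂ) * p.2)) *
                      (t : ℂ)))) *
            Complex.exp (Complex.I * (q : ℂ) * (n : ℂ) * (p.2.im : ℂ)))
        (fun p : ℂ × ℂ => 1 / ((Real.pi : ℂ) * (p.1 + starRingEnd ℂ p.2) ^ 2))
        atTop S :=
  fun _ hS hSH => tendstoUniformlyOn_scaled_edgeKernel (min Q 1) (lt_min hqQ hq1) hqQ.ne' hS hSH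

theorem edgeToBergman
    (q Q : ℝ) (hq0 : 0 ≤ q) (hq1 : q < 1) (hqQ : q < Q) :
    ∀ S : Set (ℂ × ℂ), IsCompact S →
      S ⊆ {p : ℂ × ℂ | p.1.re < 0 ∧ p.2.re < 0} →
      TendstoUniformlyOn
        (fun (n : ℕ) (p : ℂ × ℂ) =>
          Complex.exp (-Complex.I * (q : ℂ) * (n : ℂ) * (p.1.im : ℂ)) *
            ((n : ℂ) ^ 2 *
              (((Real.exp (-(q * ((n : ℂ) * p.1).re)) : ℝ) : ℂ) *
                ((Real.exp (-(q * ((n : ℂ) * p.2).re)) : ℝ) : ℂ) *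
                (1 / (Real.pi : ℂ)) *
                ∫ t in q..(min Q 1),
                  (((Q - t) * (t - q) / (Q - q) : ℝ) : ℂ) *
                    Complex.exp ((((n : ℂ) * p.1) + starRingEnd ℂ ((n : ℂ) * p.2)) *
                      (t : ℂ)))) *
            Complex.exp (Complex.I * (q : ℂ) * (n : ℂ) * (p.2.im : ℂ)))
        (fun p : ℂ × ℂ => 1 / ((Real.pi : ℂ) * (p.1 + starRingEnd ℂ p.2) ^ 2))
        atTop S :=
  edgeToBergman_general q Q hq1 hqQ
end

section
/- For each χ > 0 let ε_χ > 0 be the unique positive solution of e^{χ ε_χ} ε_χ = 1. Then for every a ∈ ℝ, lim_{χ → ∞} ∏_{k=0}^∞ ( 1 − (1 + ε_χ/2 + a/(2χ))^{−2k−2χ} ) = exp(−e^{−a}), where the limit is taken along χ → ∞ (in particular the infinite product is understood for χ large enough that 1 + ε_χ/2 + a/(2χ) > 1). -/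
/-!
With `t = 1 + ε/2 + a/(2χ)`, `u = t^(-2χ)` and `q = t^(-2)` the product is `∏ (1 - u q^k)`, and
`-y/(1-y) ≤ log (1 - y) ≤ -y` squeezes its logarithm between `-u/((1-q)(1-u))` and `-u/(1-q)`.
Since `log ε = -χε` and `χε² = -ε log ε → 0`, we get `2χ log t = χε + a + o(1)`, i.e.
`u ~ e^(-a) ε`, while `1 - q ~ 2(t - 1) ~ ε`. Hence `u → 0` and `u/(1-q) → e^(-a)`.
-/

open Filter Topology Real

lemma abs_log_one_add_sub_self_le {x : ℝ} (hx : |x| ≤ 1 / 2) :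
    |log (1 + x) - x| ≤ 2 * x ^ 2 := by
  have h := abs_log_sub_add_sum_range_le (x := -x) (by rw [abs_neg]; linarith) 1
  simp only [Finset.range_one, Finset.sum_singleton, abs_neg, sub_neg_eq_add] at h
  calc |log (1 + x) - x| = |(-x) ^ (0 + 1) / (0 + 1) + log (1 + x)| := by
        congr 1; simp only [zero_add, pow_one, div_one]; ring
    _ ≤ |x| ^ (1 + 1) / (1 - |x|) := by convert h using 3; ring
    _ ≤ 2 * x ^ 2 := by
        rw [div_le_iff₀ (by linarith), sq_abs]
        nlinarith [sq_nonneg x]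

lemma tendsto_mul_log_one_add_sub_self {α : Type*} {l : Filter α} {f x : α → ℝ}
    (hx : Tendsto x l (𝓝 0)) (hfx : Tendsto (fun i ↦ f i * x i ^ 2) l (𝓝 0)) :
    Tendsto (fun i ↦ f i * (log (1 + x i) - x i)) l (𝓝 0) := by
  refine squeeze_zero_norm' ?_ (by simpa using (hfx.norm.const_mul 2))
  filter_upwards [(tendsto_norm.comp hx).eventually (ge_mem_nhds (by norm_num : ‖(0 : ℝ)‖ < 1 / 2))]
    with i hi
  simp only [Function.comp_apply, Real.norm_eq_abs, abs_mul] at hi ⊢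
  calc |f i| * |log (1 + x i) - x i| ≤ |f i| * (2 * x i ^ 2) :=
        mul_le_mul_of_nonneg_left (abs_log_one_add_sub_self_le hi) (abs_nonneg _)
    _ = 2 * (|f i| * x i ^ 2) := by ring

lemma neg_div_one_sub_le_log_one_sub {y : ℝ} (hy : y < 1) : -(y / (1 - y)) ≤ log (1 - y) := by
  have h := one_sub_inv_le_log_of_pos (sub_pos.2 hy)
  have hinv : 1 - (1 - y)⁻¹ = -(y / (1 - y)) := by field_simp [(sub_pos.2 hy).ne']; ring
  rwa [hinv] at h

section GeometricProduct

variable {u q : ℝ}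

lemma one_sub_mul_pow_pos (hu0 : 0 ≤ u) (hu1 : u < 1) (hq0 : 0 ≤ q) (hq1 : q < 1) (k : ℕ) :
    0 < 1 - u * q ^ k := by
  nlinarith [pow_le_one₀ hq0 hq1.le (n := k), pow_nonneg hq0 k]

lemma summable_log_one_sub_mul_pow (hq0 : 0 ≤ q) (hq1 : q < 1) :
    Summable fun k : ℕ ↦ log (1 - u * q ^ k) := by
  simpa [sub_eq_add_neg] using
    summable_log_one_add_of_summable ((summable_geometric_of_lt_one hq0 hq1).mul_left (-u))

lemma tsum_log_one_sub_mul_pow_le (hu0 : 0 ≤ u) (hu1 : u < 1) (hq0 : 0 ≤ q) (hq1 : q < 1) :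
    ∑' k : ℕ, log (1 - u * q ^ k) ≤ -(u / (1 - q)) :=
  calc ∑' k : ℕ, log (1 - u * q ^ k) ≤ ∑' k : ℕ, -(u * q ^ k) := by
        refine (summable_log_one_sub_mul_pow hq0 hq1).tsum_le_tsum (fun k ↦ ?_)
          ((summable_geometric_of_lt_one hq0 hq1).mul_left u).neg
        linarith [log_le_sub_one_of_pos (one_sub_mul_pow_pos hu0 hu1 hq0 hq1 k)]
    _ = -(u / (1 - q)) := by
        rw [tsum_neg, tsum_mul_left, tsum_geometric_of_lt_one hq0 hq1, div_eq_mul_inv]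

lemma le_tsum_log_one_sub_mul_pow (hu0 : 0 ≤ u) (hu1 : u < 1) (hq0 : 0 ≤ q) (hq1 : q < 1) :
    -(u / (1 - q) / (1 - u)) ≤ ∑' k : ℕ, log (1 - u * q ^ k) :=
  calc -(u / (1 - q) / (1 - u)) = ∑' k : ℕ, -(u / (1 - u) * q ^ k) := by
        rw [tsum_neg, tsum_mul_left, tsum_geometric_of_lt_one hq0 hq1]; ring
    _ ≤ ∑' k : ℕ, log (1 - u * q ^ k) := by
        refine ((summable_geometric_of_lt_one hq0 hq1).mul_left _).neg.tsum_le_tsum (fun k ↦ ?_)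
          (summable_log_one_sub_mul_pow hq0 hq1)
        have hpos := one_sub_mul_pow_pos hu0 hu1 hq0 hq1 k
        have hle : u * q ^ k / (1 - u * q ^ k) ≤ u / (1 - u) * q ^ k := by
          rw [div_mul_eq_mul_div]
          refine div_le_div_of_nonneg_left (by positivity) (by linarith) ?_
          nlinarith [pow_le_one₀ hq0 hq1.le (n := k)]
        linarith [neg_div_one_sub_le_log_one_sub (sub_pos.1 hpos)]

lemma tprod_one_sub_mul_pow_eq_exp_tsum (hu0 : 0 ≤ u) (hu1 : u < 1) (hq0 : 0 ≤ q)
    (hq1 : q < 1) : ∏' k : ℕ, (1 - u * q ^ k) = exp (∑' k : ℕ, log (1 - u * q ^ k)) :=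
  (rexp_tsum_eq_tprod (one_sub_mul_pow_pos hu0 hu1 hq0 hq1)
    (summable_log_one_sub_mul_pow hq0 hq1)).symm

end GeometricProduct

lemma tendsto_tprod_one_sub_mul_pow {α : Type*} {l : Filter α} {u q : α → ℝ} {L : ℝ}
    (hu : ∀ᶠ i in l, 0 ≤ u i) (hq : ∀ᶠ i in l, 0 ≤ q i ∧ q i < 1) (hu0 : Tendsto u l (𝓝 0))
    (hL : Tendsto (fun i ↦ u i / (1 - q i)) l (𝓝 L)) :
    Tendsto (fun i ↦ ∏' k : ℕ, (1 - u i * q i ^ k)) l (𝓝 (exp (-L))) := by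
  have hbounds : ∀ᶠ i in l,
      ∏' k : ℕ, (1 - u i * q i ^ k) = exp (∑' k : ℕ, log (1 - u i * q i ^ k))
      ∧ -(u i / (1 - q i) / (1 - u i)) ≤ ∑' k : ℕ, log (1 - u i * q i ^ k)
      ∧ ∑' k : ℕ, log (1 - u i * q i ^ k) ≤ -(u i / (1 - q i)) := by
    filter_upwards [hu, hq, hu0.eventually (gt_mem_nhds one_pos)] with i hu0 ⟨hq0, hq1⟩ hu1
    exact ⟨tprod_one_sub_mul_pow_eq_exp_tsum hu0 hu1 hq0 hq1,
      le_tsum_log_one_sub_mul_pow hu0 hu1 hq0 hq1, tsum_log_one_sub_mul_pow_le hu0 hu1 hq0 hq1⟩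
  have hlower : Tendsto (fun i ↦ -(u i / (1 - q i) / (1 - u i))) l (𝓝 (-L)) := by
    simpa using (hL.div (hu0.const_sub 1) (by norm_num)).neg
  have hsum := tendsto_of_tendsto_of_tendsto_of_le_of_le' hlower hL.neg
    (hbounds.mono fun _ h ↦ h.2.1) (hbounds.mono fun _ h ↦ h.2.2)
  exact ((continuous_exp.tendsto _).comp hsum).congr' (hbounds.mono fun _ h ↦ h.1.symm)

lemma rpow_neg_two_mul_natCast_sub {t : ℝ} (ht : 0 < t) (c : ℝ) (k : ℕ) :
    t ^ (-(2 * (k : ℝ)) - 2 * c) = t ^ (-(2 * c)) * ((t ^ 2)⁻¹) ^ k := by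
  rw [sub_eq_add_neg, rpow_add ht, mul_comm, rpow_neg ht.le (2 * k), inv_pow, ← pow_mul]
  norm_cast

lemma tendsto_tprod_one_sub_rpow {α : Type*} {l : Filter α} {t c : α → ℝ} {L : ℝ}
    (ht : ∀ᶠ i in l, 1 < t i) (hu : Tendsto (fun i ↦ t i ^ (-(2 * c i))) l (𝓝 0))
    (hL : Tendsto (fun i ↦ t i ^ (-(2 * c i)) / (1 - (t i ^ 2)⁻¹)) l (𝓝 L)) :
    Tendsto (fun i ↦ ∏' k : ℕ, (1 - t i ^ (-(2 * (k : ℝ)) - 2 * c i))) l (𝓝 (exp (-L))) := by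
  have hpos : ∀ᶠ i in l, 0 < t i := ht.mono fun _ h ↦ one_pos.trans h
  refine (tendsto_tprod_one_sub_mul_pow (hpos.mono fun i h ↦ (rpow_pos_of_pos h _).le)
    (ht.mono fun i h ↦ ⟨by positivity, inv_lt_one_of_one_lt₀ (one_lt_pow₀ h two_ne_zero)⟩)
    hu hL).congr' ?_
  filter_upwards [hpos] with i h
  simp_rw [rpow_neg_two_mul_natCast_sub h]

-- `χ * ε χ` is the Lambert function `W χ`.
def IsGumbelScale (ε : ℝ → ℝ) : Prop :=
  ∀ χ : ℝ, 0 < χ → 0 < ε χ ∧ exp (χ * ε χ) * ε χ = 1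

section Scale

variable {ε : ℝ → ℝ}

lemma log_scale_eq (hε : IsGumbelScale ε) {χ : ℝ} (hχ : 0 < χ) :
    log (ε χ) = -(χ * ε χ) := by
  have h := congrArg log (hε χ hχ).2
  rw [log_mul (exp_pos _).ne' (hε χ hχ).1.ne', log_exp, log_one] at h
  linarith

lemma tendsto_scale_nhds_zero (hε : IsGumbelScale ε) : Tendsto ε atTop (𝓝 0) := by
  -- `1 + χ ε ≤ exp (χ ε) = ε⁻¹` gives `χ ε² ≤ 1`
  have hsq : Tendsto (fun χ ↦ ε χ ^ 2) atTop (𝓝 0) := by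
    refine squeeze_zero' (.of_forall fun _ ↦ sq_nonneg _) ?_ tendsto_inv_atTop_zero
    filter_upwards [eventually_gt_atTop 0] with χ hχ
    obtain ⟨hpos, heq⟩ := hε χ hχ
    rw [← one_div, le_div_iff₀ hχ]
    nlinarith [add_one_le_exp (χ * ε χ)]
  rw [tendsto_zero_iff_abs_tendsto_zero]
  simpa [Function.comp_def, sqrt_sq_eq_abs] using hsq.sqrt

lemma tendsto_mul_scale_atTop (hε : IsGumbelScale ε) :
    Tendsto (fun χ ↦ χ * ε χ) atTop atTop := by
  have hε0 : Tendsto ε atTop (𝓝[>] 0) := tendsto_nhdsWithin_iff.2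
    ⟨tendsto_scale_nhds_zero hε, (eventually_gt_atTop 0).mono fun χ hχ ↦ (hε χ hχ).1⟩
  refine (tendsto_neg_atBot_atTop.comp (tendsto_log_nhdsGT_zero.comp hε0)).congr' ?_
  filter_upwards [eventually_gt_atTop 0] with χ hχ
  simp [log_scale_eq hε hχ]

lemma tendsto_mul_scale_sq (hε : IsGumbelScale ε) :
    Tendsto (fun χ ↦ χ * ε χ ^ 2) atTop (𝓝 0) := by
  have h := ((continuous_mul_log.tendsto 0).comp (tendsto_scale_nhds_zero hε)).neg
  simp only [Function.comp_def, zero_mul, neg_zero] at h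
  refine h.congr' ?_
  filter_upwards [eventually_gt_atTop 0] with χ hχ
  rw [log_scale_eq hε hχ]
  ring

lemma tendsto_shift_nhds_zero (hε : IsGumbelScale ε) (a : ℝ) :
    Tendsto (fun χ ↦ ε χ / 2 + a / (2 * χ)) atTop (𝓝 0) := by
  simpa using ((tendsto_scale_nhds_zero hε).div_const 2).add
    (tendsto_const_nhds.div_atTop (tendsto_id.const_mul_atTop two_pos))

lemma eventually_shift_pos (hε : IsGumbelScale ε) (a : ℝ) :
    ∀ᶠ χ in atTop, 0 < ε χ / 2 + a / (2 * χ) := by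
  filter_upwards [eventually_gt_atTop 0, (tendsto_mul_scale_atTop hε).eventually_gt_atTop (-a)]
    with χ hχ hlarge
  have : ε χ / 2 + a / (2 * χ) = (χ * ε χ + a) / (2 * χ) := by field_simp
  rw [this]
  exact div_pos (by linarith) (by linarith)

lemma tendsto_mul_shift_sq (hε : IsGumbelScale ε) (a : ℝ) :
    Tendsto (fun χ ↦ 2 * χ * (ε χ / 2 + a / (2 * χ)) ^ 2) atTop (𝓝 0) := by
  have h := (((tendsto_mul_scale_sq hε).div_const 2).add
    ((tendsto_scale_nhds_zero hε).mul_const a)).add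
    ((tendsto_const_nhds (x := a ^ 2)).div_atTop (tendsto_id.const_mul_atTop two_pos))
  simp only [zero_div, zero_mul, add_zero, id] at h
  refine h.congr' ?_
  filter_upwards [eventually_gt_atTop 0] with χ hχ
  field_simp
  ring

lemma tendsto_shift_div_scale (hε : IsGumbelScale ε) (a : ℝ) :
    Tendsto (fun χ ↦ (ε χ / 2 + a / (2 * χ)) / ε χ) atTop (𝓝 (1 / 2)) := by
  have h := (tendsto_const_nhds (x := (1 / 2 : ℝ))).add ((tendsto_const_nhds (x := a)).div_atTop
    ((tendsto_mul_scale_atTop hε).const_mul_atTop two_pos))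
  rw [add_zero] at h
  refine h.congr' ?_
  filter_upwards [eventually_gt_atTop 0] with χ hχ
  have := (hε χ hχ).1
  field_simp

lemma tendsto_rpow_div_scale (hε : IsGumbelScale ε) (a : ℝ) :
    Tendsto (fun χ ↦ (1 + ε χ / 2 + a / (2 * χ)) ^ (-(2 * χ)) / ε χ) atTop (𝓝 (exp (-a))) := by
  have hlog := tendsto_mul_log_one_add_sub_self (tendsto_shift_nhds_zero hε a)
    (tendsto_mul_shift_sq hε a)
  have h := (continuous_exp.tendsto _).comp ((tendsto_const_nhds (x := -a)).sub hlog)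
  rw [sub_zero] at h
  refine h.congr' ?_
  filter_upwards [eventually_gt_atTop 0, eventually_shift_pos hε a] with χ hχ hx
  have hshift : 2 * χ * (ε χ / 2 + a / (2 * χ)) = χ * ε χ + a := by field_simp
  rw [Function.comp_apply, add_assoc]
  generalize ε χ / 2 + a / (2 * χ) = x at hx hshift ⊢
  rw [rpow_def_of_pos (by linarith), eq_div_iff (hε χ hχ).1.ne', ← exp_log (hε χ hχ).1,
    log_scale_eq hε hχ, ← exp_add]
  congr 1
  linear_combination hshift

lemma tendsto_one_sub_inv_sq_div_scale (hε : IsGumbelScale ε) (a : ℝ) :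
    Tendsto (fun χ ↦ (1 - ((1 + ε χ / 2 + a / (2 * χ)) ^ 2)⁻¹) / ε χ) atTop (𝓝 1) := by
  have hx := tendsto_shift_nhds_zero hε a
  have h := (tendsto_shift_div_scale hε a).mul (((tendsto_const_nhds (x := (2 : ℝ))).add hx).div
    (((tendsto_const_nhds (x := (1 : ℝ))).add hx).pow 2) (by norm_num))
  norm_num at h
  refine h.congr' ?_
  filter_upwards [eventually_gt_atTop 0, eventually_shift_pos hε a] with χ hχ hx
  have := (hε χ hχ).1
  rw [add_assoc]
  generalize ε χ / 2 + a / (2 * χ) = x at hx ⊢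
  field_simp
  ring

end Scale

theorem gumbelWeakly
    (ε : ℝ → ℝ)
    (hε : ∀ χ : ℝ, 0 < χ → 0 < ε χ ∧ Real.exp (χ * ε χ) * ε χ = 1)
    (a : ℝ) :
    Tendsto (fun χ : ℝ =>
        ∏' k : ℕ, (1 - (1 + ε χ / 2 + a / (2 * χ)) ^ (-(2 * (k : ℝ)) - 2 * χ)))
      atTop (𝓝 (Real.exp (-Real.exp (-a)))) := by
  have hscale : ∀ᶠ χ in atTop, ε χ ≠ 0 :=
    (eventually_gt_atTop 0).mono fun χ hχ ↦ (hε χ hχ).1.ne'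
  have hu := tendsto_rpow_div_scale hε a
  refine tendsto_tprod_one_sub_rpow (c := fun χ ↦ χ)
    ((eventually_shift_pos hε a).mono fun χ hx ↦ by linarith) ?_ ?_
  · have h := hu.mul (tendsto_scale_nhds_zero hε)
    rw [mul_zero] at h
    refine h.congr' ?_
    filter_upwards [hscale] with χ h
    exact div_mul_cancel₀ _ h
  · have h := hu.div (tendsto_one_sub_inv_sq_div_scale hε a) one_ne_zero
    rw [div_one] at h
    refine h.congr' ?_
    filter_upwards [hscale] with χ h
    exact div_div_div_cancel_right₀ h _ _
end

section
/- Let χ > 0 and let V : [0,∞) → [0,∞] be lower semicontinuous. Let A = { r ≥ 0 : V(r) = 0 }, and suppose R ∈ (0,∞) satisfies: the Lebesgue measure of A ∩ (R,∞) is zero, while the Lebesgue measure of A ∩ (R̄,∞) is positive for every R̄ < R. Assume moreover that ∫_0^∞ r^{2k+2χ−1} e^{−2(n+χ) V(r)} dr < ∞ for all integers 0 ≤ k < n. For n ≥ 1 and 0 ≤ k ≤ n−1 define a_k⁽ⁿ⁾ > 0 by (a_k⁽ⁿ⁾)^{−1} = 2π ∫_0^∞ r^{2k+2χ−1} e^{−2(n+χ)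 V(r)} dr, and define a_k > 0 by (a_k)^{−1} = 2π ∫_A r^{2k+2χ−1} dr. Then the functions (z, w) ↦ ∑_{k=0}^{n−1} a_k⁽ⁿ⁾ z^k (conj w)^k converge, as n → ∞, uniformly on every compact subset of D_R × D_R to (z, w) ↦ ∑_{k=0}^∞ a_k z^k (conj w)^k, where D_R = { z ∈ ℂ : |z| < R }. -/
open MeasureTheory Filter Topology

/-- `eexpNeg v = e^{-v}` for `v ∈ [0,∞]`, as a value in `[0,∞]`,
with `e^{-∞} = 0`. -/
noncomputable def eexpNeg (v : ENNReal) : ENNReal :=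
  if v = ⊤ then 0 else ENNReal.ofReal (Real.exp (-v.toReal))

/-!
Write `Iₙ(k) = ∫_{r>0} r^{2k+2χ-1} e^{-2(n+χ)V(r)} dr` and `J(k) = ∫_A r^{2k+2χ-1} dr`.
As `n → ∞` the weights `e^{-2(n+χ)V}` decrease pointwise to the indicator of `{V = 0}`, so by
dominated convergence (the `n = k + 1` integrand dominates) `Iₙ(k) → J(k)`, while `J(k) ≤ Iₙ(k)`
for every `n`. Hence `0 ≤ aₖ⁽ⁿ⁾ ≤ aₖ` and `aₖ⁽ⁿ⁾ → aₖ`. Since `A` has positive measure beyond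
every `ρ < R`, `J(k) ≥ ρ^{2k} ∫_{A ∩ (ρ,∞)} r^{2χ-1} dr` with a positive last factor, so
`aₖ ρ^{2k}` is bounded and `∑ aₖ ζ^k` converges absolutely for `|ζ| < R²`. A compact subset of
`D_R × D_R` lies in a polydisc of radius `r < R`, on which `|z w̄| ≤ r²`, and there the error is
bounded by `∑ₖ (aₖ - 𝟙_{k<n} aₖ⁽ⁿ⁾) r^{2k}`, which tends to `0` by Tannery's theorem.
-/

open Set ENNReal

lemma eexpNeg_top : eexpNeg ⊤ = 0 := if_pos rfl

lemma eexpNeg_of_ne_top {v : ℝ≥0∞} (hv : v ≠ ⊤) :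
    eexpNeg v = ENNReal.ofReal (Real.exp (-v.toReal)) := if_neg hv

@[simp]
lemma eexpNeg_zero : eexpNeg 0 = 1 := by
  simp [eexpNeg_of_ne_top]

lemma antitone_eexpNeg : Antitone eexpNeg := by
  intro a b hab
  rcases eq_or_ne b ⊤ with rfl | hb
  · simp [eexpNeg_top]
  rw [eexpNeg_of_ne_top hb, eexpNeg_of_ne_top (ne_top_of_le_ne_top hb hab)]
  gcongr

lemma measurable_eexpNeg : Measurable eexpNeg :=
  Measurable.ite (measurableSet_singleton ⊤) measurable_const
    (ENNReal.measurable_ofReal.comp (Real.measurable_exp.comp ENNReal.measurable_toReal.neg))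

lemma tendsto_eexpNeg_mul {ι : Type*} {l : Filter ι} {t : ι → ℝ} (ht : Tendsto t l atTop)
    (v : ℝ≥0∞) :
    Tendsto (fun i => eexpNeg (ENNReal.ofReal (t i) * v)) l (𝓝 (if v = 0 then 1 else 0)) := by
  split_ifs with hv
  · simpa [hv] using tendsto_const_nhds
  rcases eq_or_ne v ⊤ with rfl | hv_top
  · refine tendsto_const_nhds.congr' ?_
    filter_upwards [ht.eventually_gt_atTop 0] with i hi
    rw [ENNReal.mul_top (by simpa using hi), eexpNeg_top]
  have hexp : Tendsto (fun i => ENNReal.ofReal (Real.exp (-(t i * v.toReal)))) l (𝓝 0) := by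
    simpa using ENNReal.tendsto_ofReal (Real.tendsto_exp_atBot.comp
      (tendsto_neg_atTop_atBot.comp (ht.atTop_mul_const (ENNReal.toReal_pos hv hv_top))))
  refine hexp.congr' ?_
  filter_upwards [ht.eventually_ge_atTop 0] with i hi
  rw [eexpNeg_of_ne_top (ENNReal.mul_ne_top ENNReal.ofReal_ne_top hv_top), ENNReal.toReal_mul,
    ENNReal.toReal_ofReal hi]

section

variable {α : Type*} [MeasurableSpace α] {μ : Measure α} {g V : α → ℝ≥0∞}

lemma lintegral_indicator_le_lintegral_mul_eexpNeg (c : ℝ≥0∞) :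
    ∫⁻ x, {x | V x = 0}.indicator g x ∂μ ≤ ∫⁻ x, g x * eexpNeg (c * V x) ∂μ :=
  lintegral_mono fun x => by by_cases hVx : V x = 0 <;> simp [hVx]

theorem tendsto_lintegral_mul_eexpNeg {ι : Type*} {l : Filter ι} [l.IsCountablyGenerated]
    (hg : AEMeasurable g μ) (hg_fin : ∀ᵐ x ∂μ, g x ≠ ⊤) (hV : AEMeasurable V μ) {t : ι → ℝ}
    (ht : Tendsto t l atTop) {i₀ : ι}
    (hi₀ : ∫⁻ x, g x * eexpNeg (ENNReal.ofReal (t i₀) * V x) ∂μ ≠ ⊤) :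
    Tendsto (fun i => ∫⁻ x, g x * eexpNeg (ENNReal.ofReal (t i) * V x) ∂μ) l
      (𝓝 (∫⁻ x, {x | V x = 0}.indicator g x ∂μ)) := by
  refine tendsto_lintegral_filter_of_dominated_convergence' _
    (Eventually.of_forall fun i =>
      hg.mul (measurable_eexpNeg.comp_aemeasurable (hV.const_mul _))) ?_ hi₀ ?_
  · filter_upwards [ht.eventually_ge_atTop (t i₀)] with i hi
    exact ae_of_all _ fun x => by gcongr; exact antitone_eexpNeg (by gcongr)
  · filter_upwards [hg_fin] with x hx
    convert ENNReal.Tendsto.const_mul (tendsto_eexpNeg_mul ht (V x)) (Or.inr hx) using 2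
    by_cases hVx : V x = 0 <;> simp [hVx]

end

theorem LowerSemicontinuousOn.aemeasurable_restrict {α δ : Type*} [TopologicalSpace α]
    [MeasurableSpace α] [OpensMeasurableSpace α] [TopologicalSpace δ] [MeasurableSpace δ]
    [BorelSpace δ] [LinearOrder δ] [OrderTopology δ] [SecondCountableTopology δ] {f : α → δ}
    {s : Set α} (hf : LowerSemicontinuousOn f s) (hs : MeasurableSet s) {μ : Measure α} :
    AEMeasurable f (μ.restrict s) :=
  (aemeasurable_restrict_iff_comap_subtype hs).2
    (lowerSemicontinuous_restrict_iff.2 hf).measurable.aemeasurable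

theorem LowerSemicontinuousOn.measurableSet_inter_preimage_Iic {α δ : Type*}
    [TopologicalSpace α] [MeasurableSpace α] [OpensMeasurableSpace α] [LinearOrder δ]
    {f : α → δ} {s : Set α} (hf : LowerSemicontinuousOn f s) (hs : MeasurableSet s) (y : δ) :
    MeasurableSet (s ∩ f ⁻¹' Iic y) := by
  obtain ⟨v, hv, hsv⟩ := lowerSemicontinuousOn_iff_preimage_Iic.1 hf y
  exact hsv ▸ hs.inter hv.measurableSet

section

variable {μ : Measure ℝ}

lemma setLIntegral_ofReal_rpow_pos {s : Set ℝ} (hs : s ⊆ Ioi 0) (hμs : μ s ≠ 0) (e : ℝ) :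
    0 < ∫⁻ r in s, ENNReal.ofReal (r ^ e) ∂μ := by
  rw [setLIntegral_pos_iff (by fun_prop)]
  refine pos_iff_ne_zero.2 fun h => hμs (measure_mono_null (fun r hr => ?_) h)
  exact ⟨by simpa using Real.rpow_pos_of_pos (hs hr) e, hr⟩

lemma ofReal_pow_mul_setLIntegral_rpow_le {s : Set ℝ} (hs : MeasurableSet s) {ρ : ℝ}
    (hρ : 0 ≤ ρ) (hsρ : s ⊆ Ioi ρ) (n : ℕ) (e : ℝ) :
    ENNReal.ofReal (ρ ^ n) * ∫⁻ r in s, ENNReal.ofReal (r ^ e) ∂μ ≤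
      ∫⁻ r in s, ENNReal.ofReal (r ^ ((n : ℝ) + e)) ∂μ := by
  rw [← lintegral_const_mul' _ _ ENNReal.ofReal_ne_top]
  refine setLIntegral_mono' hs fun r hr => ?_
  have hr0 : 0 < r := hρ.trans_lt (hsρ hr)
  rw [← ENNReal.ofReal_mul (by positivity), Real.rpow_add hr0, Real.rpow_natCast]
  gcongr
  exact (hsρ hr).le

end

lemma setLIntegral_ofReal_rpow_ne_top {s : Set ℝ} {R e : ℝ} (hsR : s ≤ᵐ[volume] Ioc 0 R)
    (he : -1 < e) : ∫⁻ r in s, ENNReal.ofReal (r ^ e) ≠ ⊤ :=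
  ((lintegral_mono_set' hsR).trans_lt
    (intervalIntegral.intervalIntegrable_rpow' he).1.setLIntegral_lt_top).ne

lemma norm_ofReal_mul_pow_le {x ρ : ℝ} {ζ : ℂ} (hx : 0 ≤ x) (hζ : ‖ζ‖ ≤ ρ) (k : ℕ) :
    ‖(x : ℂ) * ζ ^ k‖ ≤ x * ρ ^ k := by
  rw [norm_mul, norm_pow, Complex.norm_of_nonneg hx]
  gcongr

lemma summable_mul_pow_of_mul_pow_le {b : ℕ → ℝ} {t ρ C : ℝ} (hb : ∀ k, 0 ≤ b k)
    (hbC : ∀ k, b k * t ^ k ≤ C) (hρ : 0 ≤ ρ) (hρt : ρ < t) :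
    Summable fun k => b k * ρ ^ k := by
  have ht : 0 < t := hρ.trans_lt hρt
  have hgeom : Summable fun k => C * (ρ / t) ^ k :=
    (summable_geometric_of_lt_one (by positivity) ((div_lt_one ht).2 hρt)).mul_left C
  refine hgeom.of_nonneg_of_le (fun k => mul_nonneg (hb k) (by positivity)) fun k => ?_
  calc b k * ρ ^ k = b k * t ^ k * (ρ / t) ^ k := by
        rw [div_pow, mul_assoc, mul_div_cancel₀ _ (pow_pos ht k).ne']
    _ ≤ C * (ρ / t) ^ k := mul_le_mul_of_nonneg_right (hbC k) (by positivity)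

theorem tendstoUniformlyOn_tsum_ofReal_mul_pow {a : ℕ → ℕ → ℝ} {b : ℕ → ℝ} {ρ : ℝ}
    (hρ : 0 ≤ ρ) (ha : ∀ n k, a n k ∈ Icc 0 (b k))
    (hlim : ∀ k, Tendsto (a · k) atTop (𝓝 (b k))) (hsum : Summable fun k => b k * ρ ^ k) :
    TendstoUniformlyOn (fun n (ζ : ℂ) => ∑' k, (a n k : ℂ) * ζ ^ k)
      (fun ζ => ∑' k, (b k : ℂ) * ζ ^ k) atTop (Metric.closedBall 0 ρ) := by
  have hdefect_le : ∀ n k, (b k - a n k) * ρ ^ k ≤ b k * ρ ^ k := fun n k =>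
    mul_le_mul_of_nonneg_right (sub_le_self _ (ha n k).1) (by positivity)
  have hdefect_nonneg : ∀ n k, 0 ≤ (b k - a n k) * ρ ^ k := fun n k =>
    mul_nonneg (sub_nonneg.2 (ha n k).2) (by positivity)
  have hdefect : Tendsto (fun n => ∑' k, (b k - a n k) * ρ ^ k) atTop (𝓝 0) := by
    have := tendsto_tsum_of_dominated_convergence (𝓕 := atTop)
      (f := fun n k => (b k - a n k) * ρ ^ k) (g := fun _ => 0) hsum
      (fun k => by simpa using ((hlim k).const_sub (b k)).mul_const (ρ ^ k))
      (Eventually.of_forall fun n k => by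
        rw [Real.norm_of_nonneg (hdefect_nonneg n k)]; exact hdefect_le n k)
    rwa [tsum_zero] at this
  rw [Metric.tendstoUniformlyOn_iff]
  intro ε hε
  filter_upwards [hdefect.eventually (gt_mem_nhds hε)] with n hn ζ hζ
  rw [mem_closedBall_zero_iff] at hζ
  have hb_summable : Summable fun k => (b k : ℂ) * ζ ^ k :=
    hsum.of_norm_bounded fun k => norm_ofReal_mul_pow_le ((ha n k).1.trans (ha n k).2) hζ k
  have ha_summable : Summable fun k => (a n k : ℂ) * ζ ^ k :=
    hsum.of_norm_bounded fun k => (norm_ofReal_mul_pow_le (ha n k).1 hζ k).trans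
      (mul_le_mul_of_nonneg_right (ha n k).2 (by positivity))
  rw [dist_eq_norm, ← hb_summable.tsum_sub ha_summable]
  refine lt_of_le_of_lt (tsum_of_norm_bounded
    (hsum.of_nonneg_of_le (hdefect_nonneg n) (hdefect_le n)).hasSum fun k => ?_) hn
  rw [← sub_mul, ← Complex.ofReal_sub]
  exact norm_ofReal_mul_pow_le (sub_nonneg.2 (ha n k).2) hζ k

theorem tendstoUniformlyOn_sum_range_ofReal_mul_pow {c : ℕ → ℕ → ℝ} {b : ℕ → ℝ} {ρ : ℝ}
    (hρ : 0 ≤ ρ) (hc : ∀ n k, k < n → c n k ∈ Icc 0 (b k))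
    (hlim : ∀ k, Tendsto (c · k) atTop (𝓝 (b k))) (hsum : Summable fun k => b k * ρ ^ k) :
    TendstoUniformlyOn (fun n (ζ : ℂ) => ∑ k ∈ Finset.range n, (c n k : ℂ) * ζ ^ k)
      (fun ζ => ∑' k, (b k : ℂ) * ζ ^ k) atTop (Metric.closedBall 0 ρ) := by
  set a : ℕ → ℕ → ℝ := fun n => (Iio n).indicator (c n)
  have ha : ∀ n k, a n k ∈ Icc 0 (b k) := by
    intro n k
    by_cases hk : k < n
    · simpa [a, hk] using hc n k hk
    · simpa [a, hk] using (hc (k + 1) k k.lt_succ_self).1.trans (hc (k + 1) k k.lt_succ_self).2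
  have ha_lim : ∀ k, Tendsto (a · k) atTop (𝓝 (b k)) := fun k =>
    (hlim k).congr' <| by
      filter_upwards [eventually_gt_atTop k] with n hn
      simp [a, hn]
  refine (tendstoUniformlyOn_tsum_ofReal_mul_pow hρ ha ha_lim hsum).congr
    (Eventually.of_forall fun n ζ _ => ?_)
  beta_reduce
  rw [sum_eq_tsum_indicator, Finset.coe_range]
  congr 1 with k
  by_cases hk : k < n <;> simp [a, hk]

theorem tendstoUniformlyOn_sum_range_ofReal_mul_pow_mul_conj_pow {c : ℕ → ℕ → ℝ} {b : ℕ → ℝ}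
    {R : ℝ} (hR : 0 < R) (hc : ∀ n k, k < n → c n k ∈ Icc 0 (b k))
    (hlim : ∀ k, Tendsto (c · k) atTop (𝓝 (b k)))
    (hgrowth : ∀ ρ, 0 ≤ ρ → ρ < R → ∃ C, ∀ k, b k * ρ ^ (2 * k) ≤ C)
    {S : Set (ℂ × ℂ)} (hS : IsCompact S) (hSR : S ⊆ {p : ℂ × ℂ | ‖p.1‖ < R ∧ ‖p.2‖ < R}) :
    TendstoUniformlyOn
      (fun n (p : ℂ × ℂ) => ∑ k ∈ Finset.range n, (c n k : ℂ) * p.1 ^ k * (starRingEnd ℂ p.2) ^ k)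
      (fun p => ∑' k, (b k : ℂ) * p.1 ^ k * (starRingEnd ℂ p.2) ^ k) atTop S := by
  have hb : ∀ k, 0 ≤ b k := fun k =>
    (hc (k + 1) k k.lt_succ_self).1.trans (hc (k + 1) k k.lt_succ_self).2
  obtain ⟨r, ⟨hr, hrR⟩, hSr⟩ : ∃ r ∈ Ioo 0 R, S ⊆ Metric.ball 0 r :=
    exists_pos_lt_subset_ball hR hS.isClosed fun p hp => by
      simpa [Prod.norm_def] using hSR hp
  obtain ⟨C, hC⟩ := hgrowth ((r + R) / 2) (by linarith) (by linarith)
  have hsum : Summable fun k => b k * (r ^ 2) ^ k :=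
    summable_mul_pow_of_mul_pow_le hb (t := ((r + R) / 2) ^ 2)
      (fun k => by rw [← pow_mul]; exact hC k) (by positivity) (by gcongr; linarith)
  have hmaps : S ⊆ (fun p : ℂ × ℂ => p.1 * starRingEnd ℂ p.2) ⁻¹' Metric.closedBall 0 (r ^ 2) := by
    intro p hp
    have hpr := (mem_ball_zero_iff.1 (hSr hp)).le
    rw [mem_preimage, mem_closedBall_zero_iff, norm_mul, RCLike.norm_conj, sq]
    exact mul_le_mul ((norm_fst_le p).trans hpr) ((norm_snd_le p).trans hpr) (norm_nonneg _) hr.le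
  have hball := tendstoUniformlyOn_sum_range_ofReal_mul_pow (sq_nonneg r) hc hlim hsum
  simpa only [Function.comp_def, mul_pow, mul_assoc] using (hball.comp _).mono hmaps

theorem tendstoUniformlyOn_sum_range_inv_moment {I : ℕ → ℕ → ℝ≥0∞} {J : ℕ → ℝ≥0∞} {R : ℝ}
    (hR : 0 < R) (hJI : ∀ n k, J k ≤ I n k) (hI : ∀ n k, k < n → I n k ≠ ⊤)
    (hJ : ∀ k, J k ≠ ⊤) (hlim : ∀ k, Tendsto (I · k) atTop (𝓝 (J k)))
    (hgrowth : ∀ ρ, 0 ≤ ρ → ρ < R → ∃ m, 0 < m ∧ ∀ k, ENNReal.ofReal (ρ ^ (2 * k)) * m ≤ J k)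
    {S : Set (ℂ × ℂ)} (hS : IsCompact S) (hSR : S ⊆ {p : ℂ × ℂ | ‖p.1‖ < R ∧ ‖p.2‖ < R}) :
    TendstoUniformlyOn
      (fun n (p : ℂ × ℂ) => ∑ k ∈ Finset.range n,
        (((2 * Real.pi * (I n k).toReal)⁻¹ : ℝ) : ℂ) * p.1 ^ k * (starRingEnd ℂ p.2) ^ k)
      (fun p => ∑' k,
        (((2 * Real.pi * (J k).toReal)⁻¹ : ℝ) : ℂ) * p.1 ^ k * (starRingEnd ℂ p.2) ^ k)
      atTop S := by
  have hJ_pos : ∀ k, 0 < (J k).toReal := fun k => by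
    obtain ⟨m, hm, hmJ⟩ := hgrowth (R / 2) (by positivity) (by linarith)
    refine ENNReal.toReal_pos (ne_of_gt ((ENNReal.mul_pos ?_ hm.ne').trans_le (hmJ k))) (hJ k)
    exact (ENNReal.ofReal_pos.2 (by positivity)).ne'
  refine tendstoUniformlyOn_sum_range_ofReal_mul_pow_mul_conj_pow hR
    (fun n k hk => ⟨by positivity, ?_⟩) (fun k => ?_) (fun ρ hρ hρR => ?_) hS hSR
  · exact inv_anti₀ (by have := hJ_pos k; positivity)
      (mul_le_mul_of_nonneg_left (ENNReal.toReal_mono (hI n k hk) (hJI n k)) (by positivity))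
  · exact (((ENNReal.tendsto_toReal (hJ k)).comp (hlim k)).const_mul _).inv₀
      (by have := hJ_pos k; positivity)
  · obtain ⟨m, hm, hmJ⟩ := hgrowth ρ hρ hρR
    have hm_top : m ≠ ⊤ := ne_top_of_le_ne_top (hJ 0) (by simpa using hmJ 0)
    refine ⟨(2 * Real.pi * m.toReal)⁻¹, fun k => ?_⟩
    have hmJk : ρ ^ (2 * k) * m.toReal ≤ (J k).toReal := by
      simpa [ENNReal.toReal_mul, ENNReal.toReal_ofReal (by positivity : 0 ≤ ρ ^ (2 * k))]
        using ENNReal.toReal_mono (hJ k) (hmJ k)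
    have hm_pos := ENNReal.toReal_pos hm.ne' hm_top
    have hJk_pos := hJ_pos k
    rw [← div_eq_inv_mul, div_le_iff₀ (by positivity), ← div_eq_inv_mul,
      le_div_iff₀ (by positivity)]
    nlinarith [Real.pi_pos]

theorem particlesAtZeroPotentialKernel
    (χ : ℝ) (hχ : 0 < χ)
    (V : ℝ → ENNReal) (hV : LowerSemicontinuousOn V (Set.Ici 0))
    (R : ℝ) (hR : 0 < R)
    (hA0 : volume ({r : ℝ | 0 ≤ r ∧ V r = 0} ∩ Set.Ioi R) = 0)
    (hA1 : ∀ R' : ℝ, R' < R → 0 < volume ({r : ℝ | 0 ≤ r ∧ V r = 0} ∩ Set.Ioi R'))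
    (hfin : ∀ n k : ℕ, k < n →
      (∫⁻ r in Set.Ioi (0 : ℝ),
        ENNReal.ofReal (r ^ (2 * (k : ℝ) + 2 * χ - 1)) *
          eexpNeg (ENNReal.ofReal (2 * ((n : ℝ) + χ)) * V r)) ≠ ⊤) :
    ∀ S : Set (ℂ × ℂ), IsCompact S →
      S ⊆ {p : ℂ × ℂ | ‖p.1‖ < R ∧ ‖p.2‖ < R} →
      TendstoUniformlyOn
        (fun (n : ℕ) (p : ℂ × ℂ) => ∑ k ∈ Finset.range n,
          (((2 * Real.pi *
              (∫⁻ r in Set.Ioi (0 : ℝ),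
                ENNReal.ofReal (r ^ (2 * (k : ℝ) + 2 * χ - 1)) *
                  eexpNeg (ENNReal.ofReal (2 * ((n : ℝ) + χ)) * V r)).toReal)⁻¹ : ℝ) : ℂ) *
            p.1 ^ k * (starRingEnd ℂ p.2) ^ k)
        (fun p : ℂ × ℂ => ∑' k : ℕ,
          (((2 * Real.pi *
              (∫⁻ r in {r : ℝ | 0 ≤ r ∧ V r = 0},
                ENNReal.ofReal (r ^ (2 * (k : ℝ) + 2 * χ - 1))).toReal)⁻¹ : ℝ) : ℂ) *
            p.1 ^ k * (starRingEnd ℂ p.2) ^ k)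
        atTop S := by
  intro S hS hSR
  have hA : MeasurableSet {r : ℝ | 0 ≤ r ∧ V r = 0} := by
    convert hV.measurableSet_inter_preimage_Iic measurableSet_Ici 0 using 1
    ext r; simp
  have hA_le : {r : ℝ | 0 ≤ r ∧ V r = 0} ≤ᵐ[volume] Ioc 0 R := by
    refine ae_le_set.2 (measure_mono_null ?_ (measure_union_null (measure_singleton 0) hA0))
    rintro r ⟨hrA, hr⟩
    rcases hrA.1.eq_or_lt with rfl | hr0
    · exact Or.inl rfl
    · exact Or.inr ⟨hrA, lt_of_not_ge fun hrR => hr ⟨hr0, hrR⟩⟩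
  have hindicator : ∀ g : ℝ → ℝ≥0∞, ∫⁻ r in Ioi 0, {r | V r = 0}.indicator g r =
      ∫⁻ r in {r : ℝ | 0 ≤ r ∧ V r = 0}, g r := fun g => by
    -- `A = Ici 0 ∩ {V = 0}`, and `Ioi 0` differs from `Ici 0` by a null set
    rw [← lintegral_indicator hA, setLIntegral_congr Ioi_ae_eq_Ici,
      ← lintegral_indicator measurableSet_Ici, indicator_indicator]
    rfl
  have hexp : ∀ k : ℕ, -1 < 2 * (k : ℝ) + 2 * χ - 1 := fun k => by
    have : (0 : ℝ) ≤ k := k.cast_nonneg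
    linarith
  refine tendstoUniformlyOn_sum_range_inv_moment hR (fun n k => ?_) hfin
    (fun k => setLIntegral_ofReal_rpow_ne_top hA_le (hexp k)) (fun k => ?_)
    (fun ρ hρ hρR => ?_) hS hSR
  · rw [← hindicator]
    exact lintegral_indicator_le_lintegral_mul_eexpNeg _
  · rw [← hindicator]
    refine tendsto_lintegral_mul_eexpNeg
      (by fun_prop)
      (ae_of_all _ fun _ => ENNReal.ofReal_ne_top)
      ((hV.mono Ioi_subset_Ici_self).aemeasurable_restrict measurableSet_Ioi) ?_
      (hfin (k + 1) k k.lt_succ_self)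
    exact (tendsto_atTop_add_const_right _ χ tendsto_natCast_atTop_atTop).const_mul_atTop two_pos
  · refine ⟨_, setLIntegral_ofReal_rpow_pos (fun r hr => hρ.trans_lt hr.2) (hA1 ρ hρR).ne'
      (2 * χ - 1), fun k => ?_⟩
    calc ENNReal.ofReal (ρ ^ (2 * k)) * _
        ≤ ∫⁻ r in {r : ℝ | 0 ≤ r ∧ V r = 0} ∩ Ioi ρ,
            ENNReal.ofReal (r ^ (((2 * k : ℕ) : ℝ) + (2 * χ - 1))) :=
          ofReal_pow_mul_setLIntegral_rpow_le (hA.inter measurableSet_Ioi) hρ inter_subset_right _ _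
      _ ≤ ∫⁻ r in {r : ℝ | 0 ≤ r ∧ V r = 0},
            ENNReal.ofReal (r ^ (((2 * k : ℕ) : ℝ) + (2 * χ - 1))) :=
          lintegral_mono_set inter_subset_left
      _ = _ := by simp only [Nat.cast_mul, Nat.cast_ofNat, add_sub_assoc]
end
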